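/- arXiv:2110.04232 — 9 statements merged into one kernel-verified Lean document; each statement's English description precedes it below -/
import Mathlib

section
/- Let C ∈ ℝ^{V×k} and W ∈ ℝ^{k×d} be column-stochastic, with C of full column rank k, and suppose W satisfies the separability condition. Then the pair (C, W) is identifiable. -/
open scoped BigOperators ENNReal NNReal
open MeasureTheory Matrix

noncomputable section

/-- Euclidean (ℓ²) norm of a vector in `Fin m → ℝ`. -/
def l2 {m : ℕ} (x : Fin m → ℝ) : ℝ := Real.sqrt (∑ i, x i ^ 2)

/-- The `f`-th standard basis vector of `ℝ^k`. -/
def eVec (k : ℕ) (f : Fin k) : Fin k → ℝ := fun i => if i = f then 1 else 0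

/-- A matrix is column-stochastic: nonnegative entries, columns summing to one. -/
def colStoch {p q : ℕ} (A : Matrix (Fin p) (Fin q) ℝ) : Prop :=
  (∀ i j, 0 ≤ A i j) ∧ ∀ j, ∑ i, A i j = 1

/-- Separability: after a column permutation, the first `k` columns form the identity. -/
def Separable {k d : ℕ} (W : Matrix (Fin k) (Fin d) ℝ) : Prop :=
  ∃ g : Fin k → Fin d, Function.Injective g ∧
    ∀ i j : Fin k, W i (g j) = if i = j then 1 else 0

/-- The columns of a matrix, viewed as points of Euclidean space. -/
def cols {p q : ℕ} (A : Matrix (Fin p) (Fin q) ℝ) : Set (EuclideanSpace ℝ (Fin p)) :=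
  Set.range fun j : Fin q => (WithLp.toLp 2 (fun i => A i j) : EuclideanSpace ℝ (Fin p))

/-- `|conv(A)|`: the (q-1)-dimensional Hausdorff measure of the convex hull of the columns. -/
def convVol {p q : ℕ} (A : Matrix (Fin p) (Fin q) ℝ) : ℝ≥0∞ :=
  μH[(q : ℝ) - 1] (convexHull ℝ (cols A))

/-- Spectral norm (largest singular value) of a matrix. -/
def specNorm {p q : ℕ} (A : Matrix (Fin p) (Fin q) ℝ) : ℝ :=
  ‖LinearMap.toContinuousLinearMap (Matrix.toEuclideanLin A)‖

/-- `dis(C, C̄)`: minimum over column permutations of the spectral norm of the difference. -/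
def dis {p q : ℕ} (C Cb : Matrix (Fin p) (Fin q) ℝ) : ℝ :=
  ⨅ σ : Equiv.Perm (Fin q), specNorm (Cb - C.submatrix id ⇑σ)

/-- Identifiability of `(C, W)` under the minimum volume constraint. -/
def Identifiable {V k d : ℕ} (C : Matrix (Fin V) (Fin k) ℝ)
    (W : Matrix (Fin k) (Fin d) ℝ) : Prop :=
  ∀ (Cb : Matrix (Fin V) (Fin k) ℝ) (Wb : Matrix (Fin k) (Fin d) ℝ),
    colStoch Cb → colStoch Wb → C * W = Cb * Wb → convVol Cb ≤ convVol C →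
    dis C Cb = 0

/-! Separability gives `C = C̄ A` with `A` column-stochastic, so the simplex `conv(C)` lies inside
`conv(C̄)`. Since `C` has full column rank, `conv(C)` is a nondegenerate `(k-1)`-simplex, hence has
nonempty interior in the `(k-1)`-dimensional affine span of `C̄`; there the Hausdorff measure is a
Haar measure, so a convex set containing `conv(C)` and of no larger measure must equal it. Thus also
`C̄ = C B` with `B` column-stochastic, `C B A = C` forces `B A = 1`, and a column-stochastic matrix
with a column-stochastic inverse is a permutation matrix. -/

open Set Module

theorem mem_convexHull_range_iff {ι E : Type*} [Fintype ι] [AddCommGroup E] [Module ℝ E]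
    {v : ι → E} {x : E} :
    x ∈ convexHull ℝ (range v) ↔ ∃ w ∈ stdSimplex ℝ ι, ∑ i, w i • v i = x := by
  classical
  have hv : range v = Fintype.linearCombination ℝ v '' range fun i => Pi.single i 1 := by
    rw [← range_comp]; congr 1; ext i; simp
  rw [hv, ← LinearMap.image_convexHull, convexHull_rangle_single_eq_stdSimplex]
  rfl

theorem Convex.subset_of_measure_le {E : Type*} [NormedAddCommGroup E] [NormedSpace ℝ E]
    [MeasurableSpace E] [OpensMeasurableSpace E] {μ : Measure E} [μ.IsOpenPosMeasure]
    {K L : Set E} (hL : Convex ℝ L) (hLint : (interior L).Nonempty) (hK : IsClosed K)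
    (hKμ : μ K ≠ ∞) (hKL : K ⊆ L) (hμ : μ L ≤ μ K) : L ⊆ K := by
  intro b hbL
  by_contra hbK
  have hb : b ∈ closure (interior L) := by
    rw [hL.closure_interior_eq_closure_of_nonempty_interior (𝕜 := ℝ) hLint]
    exact subset_closure hbL
  -- `b ∉ K` is a limit of interior points of `L`, so `interior L \ K` is a nonempty open set.
  have hU : IsOpen (interior L ∩ Kᶜ) := isOpen_interior.inter hK.isOpen_compl
  have hUpos : 0 < μ (interior L ∩ Kᶜ) := hU.measure_pos μ <| by
    obtain ⟨x, hxK, hxL⟩ := mem_closure_iff.1 hb Kᶜ hK.isOpen_compl hbK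
    exact ⟨x, hxL, hxK⟩
  have hle : μ K + μ (interior L ∩ Kᶜ) ≤ μ K + 0 :=
    calc μ K + μ (interior L ∩ Kᶜ) = μ (K ∪ (interior L ∩ Kᶜ)) :=
          (measure_union (disjoint_compl_right.mono_right inter_subset_right)
            hU.measurableSet).symm
      _ ≤ μ L := measure_mono (union_subset hKL (inter_subset_left.trans interior_subset))
      _ ≤ μ K + 0 := by rwa [add_zero]
  exact hUpos.ne' (nonpos_iff_eq_zero.1 (ENNReal.le_of_add_le_add_left hKμ hle))

theorem AffineIndependent.range_subset_convexHull_of_addHaar_le {F : Type*}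
    [NormedAddCommGroup F] [NormedSpace ℝ F] [FiniteDimensional ℝ F] [MeasurableSpace F]
    [BorelSpace F] {μ : Measure F} [μ.IsAddHaarMeasure] {ι : Type*} [Fintype ι] {p q : ι → F}
    (hp : AffineIndependent ℝ p) (hcard : Fintype.card ι = finrank ℝ F + 1)
    (hpq : range p ⊆ convexHull ℝ (range q))
    (hμ : μ (convexHull ℝ (range q)) ≤ μ (convexHull ℝ (range p))) :
    range q ⊆ convexHull ℝ (range p) := by
  have hcpt : IsCompact (convexHull ℝ (range p)) :=
    (finite_range p).isCompact_convexHull (𝕜 := ℝ)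
  have hint : (interior (convexHull ℝ (range p))).Nonempty := by
    rw [interior_convexHull_nonempty_iff_affineSpan_eq_top]
    exact hp.affineSpan_eq_top_iff_card_eq_finrank_add_one.2 hcard
  have hKL : convexHull ℝ (range p) ⊆ convexHull ℝ (range q) :=
    convexHull_min hpq (convex_convexHull ℝ _)
  exact (subset_convexHull ℝ _).trans <| (convex_convexHull ℝ _).subset_of_measure_le
    (hint.mono (interior_mono hKL)) hcpt.isClosed hcpt.measure_lt_top.ne hKL hμ

theorem AffineIndependent.range_subset_convexHull_of_hausdorffMeasure_le {E : Type*}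
    [NormedAddCommGroup E] [NormedSpace ℝ E] [MeasurableSpace E] [BorelSpace E]
    {ι : Type*} [Fintype ι] {p q : ι → E} (hp : AffineIndependent ℝ p)
    (hpq : range p ⊆ convexHull ℝ (range q))
    (hμ : μH[(Fintype.card ι : ℝ) - 1] (convexHull ℝ (range q)) ≤
      μH[(Fintype.card ι : ℝ) - 1] (convexHull ℝ (range p))) :
    range q ⊆ convexHull ℝ (range p) := by
  obtain hι | ⟨⟨i₀⟩⟩ := isEmpty_or_nonempty ι
  · simp [range_eq_empty]
  obtain ⟨n, hn⟩ := Nat.exists_eq_succ_of_ne_zero (Fintype.card_pos_iff.2 ⟨i₀⟩).ne'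
  set A := affineSpan ℝ (range q)
  have hq₀ : q i₀ ∈ A := subset_affineSpan ℝ _ (mem_range_self i₀)
  have hpA : range p ⊆ A := hpq.trans (convexHull_subset_affineSpan _)
  have hdim : finrank ℝ A.direction = n := by
    rw [direction_affineSpan]
    refine le_antisymm (finrank_vectorSpan_range_le ℝ q hn) ?_
    rw [← hp.finrank_vectorSpan hn, ← direction_affineSpan, ← direction_affineSpan]
    exact Submodule.finrank_mono (AffineSubspace.direction_le (affineSpan_le.2 hpA))
  -- Transport to `A.direction`, an `n`-dimensional normed space mapped isometrically onto `A`,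
  -- where `μH[n]` is a Haar measure.
  have : Nonempty A := ⟨⟨_, hq₀⟩⟩
  let φ : A.direction →ᵃⁱ[ℝ] E := A.subtypeₐᵢ.comp
    (AffineIsometryEquiv.vaddConst ℝ (⟨q i₀, hq₀⟩ : A)).toAffineIsometry
  have hφ : (A : Set E) ⊆ range φ := fun x hx =>
    ⟨(⟨x, hx⟩ : A) -ᵥ ⟨q i₀, hq₀⟩, by simp [φ]⟩
  obtain ⟨y, rfl⟩ := range_subset_range_iff_exists_comp.1 (hpA.trans hφ)
  obtain ⟨z, hz⟩ := range_subset_range_iff_exists_comp.1 ((subset_affineSpan ℝ _).trans hφ)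
  have himage (x : ι → A.direction) :
      convexHull ℝ (range (φ ∘ x)) = φ '' convexHull ℝ (range x) := by
    rw [range_comp]; exact (φ.toAffineMap.image_convexHull _).symm
  have hmeas (s : Set A.direction) : μH[n] (φ '' s) = μH[n] s :=
    φ.isometry.hausdorffMeasure_image (Or.inl n.cast_nonneg) s
  rw [hz, himage, range_comp, image_subset_image_iff φ.injective] at hpq ⊢
  rw [hz, himage, himage, hn, Nat.cast_succ, add_sub_cancel_right, hmeas, hmeas] at hμ
  exact (hp.of_comp φ.toAffineMap).range_subset_convexHull_of_addHaar_le
    (μ := μH[finrank ℝ A.direction]) (by rw [hn, hdim]) hpq (by rwa [hdim])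

def euclideanCol {p q : ℕ} (A : Matrix (Fin p) (Fin q) ℝ) (j : Fin q) :
    EuclideanSpace ℝ (Fin p) :=
  WithLp.toLp 2 fun i => A i j

theorem cols_eq_range_euclideanCol {p q : ℕ} (A : Matrix (Fin p) (Fin q) ℝ) :
    cols A = range (euclideanCol A) :=
  rfl

theorem euclideanCol_mul {p q r : ℕ} (A : Matrix (Fin p) (Fin q) ℝ)
    (B : Matrix (Fin q) (Fin r) ℝ) (j : Fin r) :
    euclideanCol (A * B) j = ∑ l, B l j • euclideanCol A l := by
  ext i
  simp [euclideanCol, Matrix.mul_apply, mul_comm]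

theorem colStoch_iff_forall_mem_stdSimplex {p q : ℕ} {A : Matrix (Fin p) (Fin q) ℝ} :
    colStoch A ↔ ∀ j, (fun i => A i j) ∈ stdSimplex ℝ (Fin p) := by
  simp only [colStoch, stdSimplex, mem_ofPred_eq, forall_and]
  exact and_congr_left' forall_comm

theorem cols_subset_convexHull_iff {p q r : ℕ} {A : Matrix (Fin p) (Fin q) ℝ}
    {B : Matrix (Fin p) (Fin r) ℝ} :
    cols A ⊆ convexHull ℝ (cols B) ↔
      ∃ S : Matrix (Fin r) (Fin q) ℝ, colStoch S ∧ A = B * S := by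
  simp only [cols_eq_range_euclideanCol, range_subset_iff, mem_convexHull_range_iff]
  constructor
  · intro h
    choose w hw hwA using h
    refine ⟨Matrix.of fun l j => w j l, colStoch_iff_forall_mem_stdSimplex.2 hw, ?_⟩
    ext i j
    simpa [euclideanCol, Matrix.mul_apply, mul_comm] using congr($(hwA j) i).symm
  · rintro ⟨S, hS, rfl⟩ j
    exact ⟨_, colStoch_iff_forall_mem_stdSimplex.1 hS j, (euclideanCol_mul B S j).symm⟩

theorem exists_colStoch_eq_mul_of_separable {p k d : ℕ} {C Cb : Matrix (Fin p) (Fin k) ℝ}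
    {W Wb : Matrix (Fin k) (Fin d) ℝ} (hsep : Separable W) (hWb : colStoch Wb)
    (h : C * W = Cb * Wb) : ∃ A : Matrix (Fin k) (Fin k) ℝ, colStoch A ∧ C = Cb * A := by
  obtain ⟨g, -, hg⟩ := hsep
  refine ⟨Wb.submatrix id g, ⟨fun i j => hWb.1 i (g j), fun j => hWb.2 (g j)⟩, ?_⟩
  -- The columns `g` of `W` are the identity, so those of `C W` are the columns of `C`.
  have hW : W.submatrix id g = 1 := by ext i j; simp [hg, Matrix.one_apply]
  calc C = C * W.submatrix id g := by rw [hW, Matrix.mul_one]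
    _ = (C * W).submatrix id g := rfl
    _ = Cb * Wb.submatrix id g := by rw [h]; rfl

theorem Matrix.linearIndependent_col_of_rank_eq {K m n : Type*} [Field K] [Fintype n]
    {C : Matrix m n K} (h : C.rank = Fintype.card n) : LinearIndependent K C.col :=
  linearIndependent_iff_card_eq_finrank_span.2 <| by
    rw [Set.finrank, ← rank_eq_finrank_span_cols, h]

theorem Matrix.mul_left_cancel_of_linearIndependent_col {R l m n : Type*} [CommRing R]
    [Fintype m] {C : Matrix l m R} (hC : LinearIndependent R C.col) {M N : Matrix m n R}
    (h : C * M = C * N) : M = N := by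
  ext i j
  refine congrFun (Matrix.mulVec_injective_iff.2 hC (?_ : C *ᵥ (M · j) = C *ᵥ (N · j))) i
  funext r
  simpa [Matrix.mulVec, dotProduct, Matrix.mul_apply] using congr($h r j)

theorem affineIndependent_euclideanCol {p q : ℕ} {C : Matrix (Fin p) (Fin q) ℝ}
    (hC : LinearIndependent ℝ C.col) : AffineIndependent ℝ (euclideanCol C) :=
  (hC.map' (WithLp.linearEquiv 2 ℝ (Fin p → ℝ)).symm.toLinearMap
    (LinearEquiv.ker _)).affineIndependent

theorem colStoch.eq_submatrix_one_of_mul_eq_one {k : ℕ} {B A : Matrix (Fin k) (Fin k) ℝ}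
    (hB : colStoch B) (hA : colStoch A) (h : B * A = 1) :
    ∃ σ : Equiv.Perm (Fin k),
      B = (1 : Matrix (Fin k) (Fin k) ℝ).submatrix (Equiv.refl _) σ := by
  classical
  have hpos (j : Fin k) : ∃ l, 0 < A l j := by
    by_contra! h0
    have : ∑ l, A l j = 0 := Finset.sum_eq_zero fun l _ => le_antisymm (h0 l) (hA.1 l j)
    simp [hA.2 j] at this
  choose f hf using hpos
  -- For `i ≠ j`, `0 = (B A) i j` is a sum of nonnegative terms including `B i (f j) * A (f j) j`.
  have hoff {i j : Fin k} (hij : i ≠ j) : B i (f j) = 0 := by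
    have h0 : ∑ l, B i l * A l j = 0 := by
      simpa [Matrix.mul_apply, Matrix.one_apply, hij] using congr($h i j)
    have := (Finset.sum_eq_zero_iff_of_nonneg fun l _ => mul_nonneg (hB.1 i l) (hA.1 l j)).1
      h0 (f j) (Finset.mem_univ _)
    exact (mul_eq_zero.1 this).resolve_right (hf j).ne'
  have hdiag (j : Fin k) : B j (f j) = 1 := by
    rw [← hB.2 (f j), Finset.sum_eq_single j (fun i _ hij => hoff hij) (by simp)]
  have hinj : f.Injective := fun j j' hjj' => by
    by_contra hne
    have := hoff hne
    rw [← hjj', hdiag] at this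
    exact one_ne_zero this
  let e := Equiv.ofBijective f hinj.bijective_of_finite
  refine ⟨e.symm, ?_⟩
  ext i l
  obtain ⟨j, rfl⟩ := e.surjective l
  rw [submatrix_apply, Equiv.symm_apply_apply, Equiv.ofBijective_apply, Matrix.one_apply]
  split_ifs with hij
  · exact hij ▸ hdiag i
  · exact hoff hij

theorem dis_submatrix_self {p q : ℕ} (C : Matrix (Fin p) (Fin q) ℝ) (σ : Equiv.Perm (Fin q)) :
    dis C (C.submatrix id σ) = 0 :=
  le_antisymm
    ((ciInf_le ⟨0, forall_mem_range.2 fun _ => norm_nonneg _⟩ σ).trans_eq (by simp))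
    (le_ciInf fun _ => norm_nonneg _)

theorem stmt1_general {V k d : ℕ} (C : Matrix (Fin V) (Fin k) ℝ) (W : Matrix (Fin k) (Fin d) ℝ)
    (hrank : C.rank = k) (hsep : Separable W) :
    Identifiable C W := by
  intro Cb Wb _ hWb hCW hvol
  obtain ⟨A, hA, hCA⟩ := exists_colStoch_eq_mul_of_separable hsep hWb hCW
  have hC : LinearIndependent ℝ C.col := linearIndependent_col_of_rank_eq (by simpa using hrank)
  have hsub : cols Cb ⊆ convexHull ℝ (cols C) :=
    (affineIndependent_euclideanCol hC).range_subset_convexHull_of_hausdorffMeasure_le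
      (cols_subset_convexHull_iff.2 ⟨A, hA, hCA⟩) (by rw [Fintype.card_fin]; exact hvol)
  obtain ⟨B, hB, hCbB⟩ := cols_subset_convexHull_iff.1 hsub
  have hBA : B * A = 1 := mul_left_cancel_of_linearIndependent_col hC <| by
    rw [Matrix.mul_one, ← Matrix.mul_assoc, ← hCbB, ← hCA]
  obtain ⟨σ, rfl⟩ := hB.eq_submatrix_one_of_mul_eq_one hA hBA
  rw [hCbB, mul_submatrix_one]
  exact dis_submatrix_self C σ

/-- If `C`, `W` are column-stochastic, `C` has full column rank and `W` satisfies the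
separability condition, then `(C, W)` is identifiable. -/
theorem stmt1 {V k d : ℕ} (C : Matrix (Fin V) (Fin k) ℝ) (W : Matrix (Fin k) (Fin d) ℝ)
    (hC : colStoch C) (hW : colStoch W) (hrank : C.rank = k) (hsep : Separable W) :
    Identifiable C W :=
  stmt1_general C W hrank hsep
end
end

section
/- Let W ∈ ℝ^{k×d} have all of its columns in the simplex Δ^{k−1} and satisfy condition (S1): cone(W)* ⊆ K. Then W has rank k (full row rank) and its smallest positive singular value satisfies σ⁺_min(W) ≥ 1/k. -/
open scoped BigOperators ENNReal NNReal
open MeasureTheory Matrix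

noncomputable section

/-- The simplicial cone generated by the columns of a matrix. -/
def coneOf {p q : ℕ} (A : Matrix (Fin p) (Fin q) ℝ) : Set (Fin p → ℝ) :=
  {x | ∃ lam : Fin q → ℝ, (∀ j, 0 ≤ lam j) ∧ x = A.mulVec lam}

/-- The dual cone of a set of vectors. -/
def dualCone {p : ℕ} (S : Set (Fin p → ℝ)) : Set (Fin p → ℝ) :=
  {x | ∀ y ∈ S, 0 ≤ ∑ i, x i * y i}

/-- The second-order cone `K = {x : ‖x‖₂ ≤ xᵀ1}`. -/
def Kset (k : ℕ) : Set (Fin k → ℝ) := {x | l2 x ≤ ∑ i, x i}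

lemma l2_nonneg {m : ℕ} (x : Fin m → ℝ) : 0 ≤ l2 x := Real.sqrt_nonneg _

lemma coord_le_l2 {m : ℕ} (x : Fin m → ℝ) (j : Fin m) : x j ≤ l2 x := by
  have h1 : x j ≤ |x j| := le_abs_self _
  have h2 : |x j| = Real.sqrt ((x j) ^ 2) := by
    rw [Real.sqrt_sq_eq_abs]
  refine h1.trans (h2.le.trans ?_)
  apply Real.sqrt_le_sqrt
  exact Finset.single_le_sum (fun i _ => sq_nonneg (x i)) (Finset.mem_univ j)

lemma l2_neg {m : ℕ} (x : Fin m → ℝ) : l2 (-x) = l2 x := by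
  unfold l2; congr 1; apply Finset.sum_congr rfl; intro i _; simp [neg_sq]

lemma mem_dual_of_cols {k d : ℕ} (W : Matrix (Fin k) (Fin d) ℝ) (z : Fin k → ℝ)
    (h : ∀ j, 0 ≤ ∑ i, z i * W i j) : z ∈ dualCone (coneOf W) := by
  rintro y ⟨lam, hlam, rfl⟩
  have : ∑ i, z i * (W.mulVec lam) i = ∑ j, lam j * ∑ i, z i * W i j := by
    simp only [Matrix.mulVec, dotProduct, Finset.mul_sum, Finset.sum_mul]
    rw [Finset.sum_comm]
    apply Finset.sum_congr rfl; intro j _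
    apply Finset.sum_congr rfl; intro i _; ring
  rw [this]
  exact Finset.sum_nonneg fun j _ => mul_nonneg (hlam j) (h j)

lemma key {k d : ℕ} (W : Matrix (Fin k) (Fin d) ℝ)
    (hW : ∀ j, (∀ i, 0 ≤ W i j) ∧ ∑ i, W i j = 1)
    (hS1 : dualCone (coneOf W) ⊆ Kset k) (hk : 1 ≤ (k : ℝ))
    (x : Fin k → ℝ) (hs : 0 ≤ ∑ i, x i) :
    l2 x ≤ (k : ℝ) * l2 (Matrix.vecMul x W) := by
  set v := Matrix.vecMul x W with hv
  set t := l2 v with ht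
  set s := ∑ i, x i with hsdef
  have ht0 : 0 ≤ t := l2_nonneg v
  -- z' = t•1 - x is in the dual cone
  have hz' : (fun i => t - x i) ∈ dualCone (coneOf W) := by
    apply mem_dual_of_cols
    intro j
    have hcol : ∑ i, (t - x i) * W i j = t - v j := by
      have : ∑ i, (t - x i) * W i j = t * (∑ i, W i j) - ∑ i, x i * W i j := by
        rw [Finset.mul_sum, ← Finset.sum_sub_distrib]
        apply Finset.sum_congr rfl; intro i _; ring
      rw [this, (hW j).2, mul_one]
      rfl
    rw [hcol]
    have := coord_le_l2 v j
    linarith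
  have hK := hS1 hz'
  have hsum : ∑ i, (t - x i) = (k : ℝ) * t - s := by
    rw [Finset.sum_sub_distrib, Finset.sum_const, Finset.card_univ, Fintype.card_fin,
      nsmul_eq_mul, hsdef]
  rw [Kset, Set.mem_setOf_eq, hsum] at hK
  have hKnn : 0 ≤ l2 (fun i => t - x i) := l2_nonneg _
  have hsle : s ≤ (k : ℝ) * t := by linarith
  -- square the inequality
  have hsq : ∑ i, (t - x i) ^ 2 ≤ ((k : ℝ) * t - s) ^ 2 := by
    have h1 : (l2 (fun i => t - x i)) ^ 2 = ∑ i, (t - x i) ^ 2 := by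
      rw [l2, Real.sq_sqrt (Finset.sum_nonneg fun i _ => sq_nonneg _)]
    nlinarith [hK, hKnn]
  have hexp : ∑ i, (t - x i) ^ 2 = (k : ℝ) * t ^ 2 - 2 * t * s + ∑ i, x i ^ 2 := by
    have : ∀ i ∈ Finset.univ, (t - x i) ^ 2 = t ^ 2 - 2 * t * x i + x i ^ 2 := by
      intro i _; ring
    rw [Finset.sum_congr rfl this, Finset.sum_add_distrib, Finset.sum_sub_distrib,
      Finset.sum_const, Finset.card_univ, Fintype.card_fin, nsmul_eq_mul, ← Finset.mul_sum,
      ← hsdef]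
  have hn : ∑ i, x i ^ 2 ≤ ((k : ℝ) * t) ^ 2 := by
    nlinarith [hsq, hexp, hs, hsle, ht0, hk,
      mul_nonneg (sub_nonneg.mpr hsle) hs, mul_nonneg (sub_nonneg.mpr hsle) ht0,
      mul_nonneg (mul_nonneg (sub_nonneg.mpr hk) ht0) hs]
  calc l2 x = Real.sqrt (∑ i, x i ^ 2) := rfl
    _ ≤ Real.sqrt (((k : ℝ) * t) ^ 2) := Real.sqrt_le_sqrt hn
    _ = (k : ℝ) * t := Real.sqrt_sq (by positivity)

/-- If all columns of `W` lie in the simplex and (S1) holds, then `W` has full row rank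
and its smallest positive singular value is at least `1/k`. -/
theorem stmt5 {k d : ℕ} (W : Matrix (Fin k) (Fin d) ℝ)
    (hW : ∀ j, (∀ i, 0 ≤ W i j) ∧ ∑ i, W i j = 1)
    (hS1 : dualCone (coneOf W) ⊆ Kset k) :
    W.rank = k ∧ ∀ x : Fin k → ℝ, (1 / k : ℝ) * l2 x ≤ l2 (Matrix.vecMul x W) := by
  rcases Nat.eq_zero_or_pos k with hk0 | hkpos
  · subst hk0
    constructor
    · exact Nat.le_zero.mp (Matrix.rank_le_card_height W)
    · intro x
      have : l2 x = 0 := by simp [l2]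
      rw [this]
      simpa using l2_nonneg (Matrix.vecMul x W)
  · have hk : 1 ≤ (k : ℝ) := by exact_mod_cast hkpos
    have hkR : 0 < (k : ℝ) := by linarith
    have main : ∀ x : Fin k → ℝ, l2 x ≤ (k : ℝ) * l2 (Matrix.vecMul x W) := by
      intro x
      rcases le_or_gt 0 (∑ i, x i) with hs | hs
      · exact key W hW hS1 hk x hs
      · have hneg : 0 ≤ ∑ i, (-x) i := by
          have h : ∑ i : Fin k, (-x) i = -∑ i : Fin k, x i := by
            simp [Finset.sum_neg_distrib]
          rw [h]; linarith
        have := key W hW hS1 hk (-x) hneg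
        rwa [l2_neg, Matrix.neg_vecMul, l2_neg] at this
    constructor
    · have hinj : Function.Injective (Matrix.mulVecLin Wᵀ) := by
        intro a b hab
        have h0 : Matrix.vecMul (a - b) W = 0 := by
          have : Wᵀ.mulVec a = Wᵀ.mulVec b := hab
          rw [Matrix.mulVec_transpose, Matrix.mulVec_transpose] at this
          rw [Matrix.sub_vecMul, this, sub_self]
        have := main (a - b)
        rw [h0] at this
        have hl0 : l2 (0 : Fin d → ℝ) = 0 := by simp [l2]
        rw [hl0, mul_zero] at this
        have hle : l2 (a - b) = 0 := le_antisymm this (l2_nonneg _)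
        have hsum0 : ∑ i, (a - b) i ^ 2 = 0 := by
          have h1 : Real.sqrt (∑ i, (a - b) i ^ 2) = 0 := hle
          have h2 : 0 ≤ ∑ i, (a - b) i ^ 2 :=
            Finset.sum_nonneg fun i _ => sq_nonneg _
          nlinarith [Real.sq_sqrt h2, h1]
        have : ∀ i, (a - b) i = 0 := by
          intro i
          have := (Finset.sum_eq_zero_iff_of_nonneg
            (fun i _ => sq_nonneg ((a - b) i))).mp hsum0 i (Finset.mem_univ i)
          exact pow_eq_zero_iff (by norm_num) |>.mp this
        funext i
        have := this i
        simp only [Pi.sub_apply] at this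
        linarith
      have : Wᵀ.rank = k := by
        rw [Matrix.rank, LinearMap.finrank_range_of_inj hinj]
        simp
      rw [← Matrix.rank_transpose]
      exact this
    · intro x
      have := main x
      rw [div_mul_eq_mul_div, div_le_iff₀ hkR, one_mul]
      linarith [mul_le_mul_of_nonneg_left (main x) (le_of_lt hkR)]
end
end

section
/- Let W ∈ ℝ^{k×d} and W̄ ∈ ℝ^{k×d'} be matrices with conv(W) ⊆ conv(W̄). If W is (α, β)-sufficiently scattered, then W̄ is also (α, β)-sufficiently scattered. -/
open scoped BigOperators ENNReal NNReal
open MeasureTheory Matrix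

noncomputable section

/-- `α`-enlargement of the dual cone of `cone(W)`: `{x : xᵀW ≥ -α‖x‖₂}`. -/
def dualConeEnl {k d : ℕ} (W : Matrix (Fin k) (Fin d) ℝ) (α : ℝ) : Set (Fin k → ℝ) :=
  {x | ∀ j, -(α * l2 x) ≤ ∑ i, x i * W i j}

/-- `α`-enlargement of `bdK`: `{x : |‖x‖₂ - xᵀ1| ≤ α‖x‖₂}`. -/
def bdKEnl (k : ℕ) (α : ℝ) : Set (Fin k → ℝ) :=
  {x | |l2 x - ∑ i, x i| ≤ α * l2 x}

/-- Points within distance `βλ` of some `λ e_f`, `λ ≥ 0`. -/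
def nearAxis (k : ℕ) (β : ℝ) : Set (Fin k → ℝ) :=
  {x | ∃ (f : Fin k) (lam : ℝ), 0 ≤ lam ∧ l2 (x - lam • eVec k f) ≤ β * lam}

/-- The `(α, β)`-sufficiently scattered condition. -/
def ABSS {k d : ℕ} (α β : ℝ) (W : Matrix (Fin k) (Fin d) ℝ) : Prop :=
  dualCone (coneOf W) ⊆ Kset k ∧ dualConeEnl W α ∩ bdKEnl k α ⊆ nearAxis k β


lemma col_comb {k d d' : ℕ} (W : Matrix (Fin k) (Fin d) ℝ) (Wb : Matrix (Fin k) (Fin d') ℝ)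
    (hconv : convexHull ℝ (Set.range fun j : Fin d => fun i => W i j) ⊆
      convexHull ℝ (Set.range fun j : Fin d' => fun i => Wb i j)) (j : Fin d) :
    ∃ μ : Fin d' → ℝ, (∀ l, 0 ≤ μ l) ∧ (∑ l, μ l = 1) ∧ ∀ i, W i j = ∑ l, μ l * Wb i l := by
  have hmem : (fun i => W i j) ∈
      convexHull ℝ (Set.range fun j : Fin d' => fun i => Wb i j) :=
    hconv (subset_convexHull ℝ _ ⟨j, rfl⟩)
  rw [convexHull_range_eq_exists_affineCombination] at hmem
  obtain ⟨s, w, h0, h1, heq⟩ := hmem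
  rw [Finset.affineCombination_eq_linear_combination _ _ _ h1] at heq
  refine ⟨fun l => if l ∈ s then w l else 0, fun l => ?_, ?_, fun i => ?_⟩
  · dsimp only; split_ifs with h
    exacts [h0 _ h, le_rfl]
  · dsimp only; rw [Finset.sum_ite_mem, Finset.univ_inter, h1]
  · have := congrFun heq i
    simp only [Finset.sum_apply, Pi.smul_apply, smul_eq_mul] at this
    rw [← this]
    dsimp only
    simp only [ite_mul, zero_mul]
    rw [Finset.sum_ite_mem, Finset.univ_inter]

lemma col_mem_cone {k d d' : ℕ} (W : Matrix (Fin k) (Fin d) ℝ) (Wb : Matrix (Fin k) (Fin d') ℝ)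
    (hconv : convexHull ℝ (Set.range fun j : Fin d => fun i => W i j) ⊆
      convexHull ℝ (Set.range fun j : Fin d' => fun i => Wb i j)) (j : Fin d) :
    (fun i => W i j) ∈ coneOf Wb := by
  obtain ⟨μ, hμ0, _, hμ⟩ := col_comb W Wb hconv j
  exact ⟨μ, hμ0, funext fun i => by simpa [Matrix.mulVec, dotProduct, mul_comm] using hμ i⟩

/-- If `conv(W) ⊆ conv(W̄)` and `W` is `(α, β)`-sufficiently scattered then so is `W̄`. -/
theorem stmt7 {k d d' : ℕ} (W : Matrix (Fin k) (Fin d) ℝ) (Wb : Matrix (Fin k) (Fin d') ℝ)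
    (α β : ℝ) (hα : 0 ≤ α) (hβ : 0 ≤ β)
    (hconv : convexHull ℝ (Set.range fun j : Fin d => fun i => W i j) ⊆
      convexHull ℝ (Set.range fun j : Fin d' => fun i => Wb i j))
    (hss : ABSS α β W) : ABSS α β Wb := by
  obtain ⟨h1, h2⟩ := hss
  constructor
  · -- dualCone (coneOf Wb) ⊆ dualCone (coneOf W) ⊆ Kset k
    intro x hx
    apply h1
    intro y hy
    obtain ⟨lam, hlam0, rfl⟩ := hy
    have : ∑ i, x i * (W.mulVec lam) i = ∑ j, lam j * ∑ i, x i * W i j := by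
      simp only [Matrix.mulVec, dotProduct, Finset.mul_sum]
      rw [Finset.sum_comm]
      exact Finset.sum_congr rfl fun j _ => Finset.sum_congr rfl fun i _ => by ring
    rw [this]
    apply Finset.sum_nonneg
    intro j _
    exact mul_nonneg (hlam0 j) (hx _ (col_mem_cone W Wb hconv j))
  · intro x ⟨hx1, hx2⟩
    apply h2
    refine ⟨?_, hx2⟩
    intro j
    obtain ⟨μ, hμ0, hμ1, hμ⟩ := col_comb W Wb hconv j
    have key : ∑ i, x i * W i j = ∑ l, μ l * ∑ i, x i * Wb i l := by
      simp only [hμ, Finset.mul_sum]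
      rw [Finset.sum_comm]
      exact Finset.sum_congr rfl fun l _ => Finset.sum_congr rfl fun i _ => by ring
    rw [key]
    calc -(α * l2 x) = ∑ l, μ l * -(α * l2 x) := by
            rw [← Finset.sum_mul, hμ1, one_mul]
      _ ≤ ∑ l, μ l * ∑ i, x i * Wb i l :=
            Finset.sum_le_sum fun l _ => mul_le_mul_of_nonneg_left (hx1 l) (hμ0 l)
end
end

section
/- Let k ≥ 3 and let W⁰ ∈ ℝ^{k×d} be column-stochastic such that for every ordered pair of indices 1 ≤ i ≠ j ≤ k there exists a column of W⁰ equal to (1 − x_{ij})e_i + x_{ij}e_j for some 0 ≤ x_{ij} < 1/k. Then there exists a constant C > 0, depending only on k and the values x_{ij}, such that W⁰ is (ε, Cε)-sufficiently scattered for every ε > 0. -/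
open scoped BigOperators ENNReal NNReal
open MeasureTheory Matrix

noncomputable section

lemma l2_sq {m : ℕ} (x : Fin m → ℝ) : l2 x ^ 2 = ∑ i, x i ^ 2 :=
  Real.sq_sqrt (Finset.sum_nonneg fun i _ => sq_nonneg _)

lemma l2_le_of {m : ℕ} {x : Fin m → ℝ} {B : ℝ} (hB : 0 ≤ B)
    (h : ∑ i, x i ^ 2 ≤ B ^ 2) : l2 x ≤ B := by
  rw [l2]
  calc Real.sqrt (∑ i, x i ^ 2) ≤ Real.sqrt (B ^ 2) := Real.sqrt_le_sqrt h
    _ = B := Real.sqrt_sq hB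

set_option maxHeartbeats 16000000

/-- If for every ordered pair `i ≠ j` some column of `W⁰` equals
`(1 - x_{ij})e_i + x_{ij}e_j` with `0 ≤ x_{ij} < 1/k`, then `W⁰` is `(ε, Cε)`-SS for every
`ε > 0`, for a constant `C > 0`. -/
theorem stmt9 {k d : ℕ} (hk : 3 ≤ k) (W : Matrix (Fin k) (Fin d) ℝ) (hW : colStoch W)
    (hcols : ∀ i j : Fin k, i ≠ j → ∃ (c : Fin d) (x : ℝ), 0 ≤ x ∧ x < 1 / k ∧
      (fun f => W f c) = (1 - x) • eVec k i + x • eVec k j) :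
    ∃ C : ℝ, 0 < C ∧ ∀ ε : ℝ, 0 < ε → ABSS ε (C * ε) W := by
  have hk0 : 0 < k := by omega
  have hkR : (3:ℝ) ≤ (k:ℝ) := by exact_mod_cast hk
  have hkRpos : (0:ℝ) < (k:ℝ) := by exact_mod_cast hk0
  haveI : Nonempty (Fin k) := ⟨⟨0, hk0⟩⟩
  choose col tt ht0 ht1 hteq using hcols
  -- the key pairing formula for the chosen columns
  have hpair : ∀ (x : Fin k → ℝ) (i j : Fin k) (h : i ≠ j),
      ∑ f, x f * W f (col i j h) = (1 - tt i j h) * x i + tt i j h * x j := by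
    intro x i j h
    have hW' : ∀ f, W f (col i j h)
        = (1 - tt i j h) * (if f = i then 1 else 0) + tt i j h * (if f = j then 1 else 0) := by
      intro f
      have h1 := congrFun (hteq i j h) f
      simpa [eVec, Pi.add_apply, Pi.smul_apply, smul_eq_mul] using h1
    have hterm : ∀ f, x f * W f (col i j h)
        = (if f = i then (1 - tt i j h) * x f else 0) + (if f = j then tt i j h * x f else 0) := by
      intro f
      rw [hW' f]
      by_cases h1 : f = i <;> by_cases h2 : f = j
      · exact absurd (h1.symm.trans h2) h
      all_goals (simp [h1, h2, h, Ne.symm h]; try ring)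
    rw [Finset.sum_congr rfl fun f _ => hterm f, Finset.sum_add_distrib,
      Finset.sum_ite_eq' Finset.univ i (fun f => (1 - tt i j h) * x f),
      Finset.sum_ite_eq' Finset.univ j (fun f => tt i j h * x f)]
    simp
  -- the chosen columns belong to the cone
  have hmemcol : ∀ (i j : Fin k) (h : i ≠ j), (fun f => W f (col i j h)) ∈ coneOf W := by
    intro i j h
    refine ⟨fun j' => if j' = col i j h then 1 else 0, fun j' => by dsimp only; split <;> norm_num, ?_⟩
    funext f
    simp [Matrix.mulVec, dotProduct, mul_ite, mul_one, mul_zero, Finset.sum_ite_eq']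
  -- extract a uniform bound u on the tt's
  obtain ⟨p0, hp0⟩ := Finite.exists_max
    (fun p : Fin k × Fin k => if h : p.1 ≠ p.2 then tt p.1 p.2 h else 0)
  obtain ⟨u, hu_def⟩ : ∃ u : ℝ, u = (if h : p0.1 ≠ p0.2 then tt p0.1 p0.2 h else 0) := ⟨_, rfl⟩
  have htu : ∀ (i j : Fin k) (h : i ≠ j), tt i j h ≤ u := by
    intro i j h
    rw [hu_def]
    exact le_trans (le_of_eq (dif_pos h).symm) (hp0 (i, j))
  have hu0 : 0 ≤ u := by
    have h1 := hp0 (⟨0, hk0⟩, ⟨0, hk0⟩)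
    rw [hu_def]
    simpa using h1
  have hu1 : u < 1/(k:ℝ) := by
    rw [hu_def]
    split
    · exact ht1 _ _ _
    · positivity
  obtain ⟨d1, hd1_def⟩ : ∃ y : ℝ, y = 1 - (k:ℝ)*u := ⟨_, rfl⟩
  have hd1 : 0 < d1 := by
    rw [hd1_def]
    have h1 : (k:ℝ)*u < (k:ℝ)*(1/(k:ℝ)) := mul_lt_mul_of_pos_left hu1 hkRpos
    rw [mul_one_div, div_self (ne_of_gt hkRpos)] at h1
    linarith
  have hd1le : d1 ≤ 1 := by
    rw [hd1_def]; nlinarith only [mul_nonneg hkRpos.le hu0]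
  obtain ⟨K', hK'_def⟩ : ∃ y : ℝ, y = 13*(k:ℝ)/d1 + 1 := ⟨_, rfl⟩
  have hK1 : 1 ≤ K' := by
    rw [hK'_def]
    have : 0 < 13*(k:ℝ)/d1 := by positivity
    linarith
  have hK'd1 : 13*(k:ℝ) ≤ K'*d1 := by
    rw [hK'_def, add_mul, div_mul_cancel₀ _ (ne_of_gt hd1)]
    linarith
  obtain ⟨D, hD_def⟩ : ∃ y : ℝ, y = 1 + 2*(k:ℝ)*K' := ⟨_, rfl⟩
  have hDpos : 0 < D := by
    have h1 : 0 < (k:ℝ)*K' := mul_pos hkRpos (by linarith only [hK1])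
    rw [hD_def]; linarith only [h1]
  obtain ⟨E', hE'_def⟩ : ∃ y : ℝ, y = (k:ℝ)*(2*D + D^2) := ⟨_, rfl⟩
  have hE'pos : 0 < E' := by
    rw [hE'_def]
    have : 0 < 2*D + D^2 := by nlinarith only [hDpos, sq_nonneg D]
    exact mul_pos hkRpos this
  obtain ⟨C, hC_def⟩ : ∃ y : ℝ, y = max (4:ℝ) (2*(k:ℝ)*E') := ⟨_, rfl⟩
  have hC4 : (4:ℝ) ≤ C := by rw [hC_def]; exact le_max_left _ _
  have hC2k : 2*(k:ℝ)*E' ≤ C := by rw [hC_def]; exact le_max_right _ _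
  have hCpos : (0:ℝ) < C := by linarith only [hC4]
  refine ⟨C, hCpos, ?_⟩
  intro ε hε
  constructor
  · -- (S1)
    intro x hx
    have hcon : ∀ (i j : Fin k) (h : i ≠ j),
        0 ≤ (1 - tt i j h) * x i + tt i j h * x j := by
      intro i j h
      have h0 := hx _ (hmemcol i j h)
      rwa [hpair x i j h] at h0
    show l2 x ≤ ∑ i, x i
    by_cases hpos : ∀ i, 0 ≤ x i
    · refine l2_le_of (Finset.sum_nonneg fun i _ => hpos i) ?_
      exact Finset.sum_sq_le_sq_sum_of_nonneg fun i _ => hpos i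
    · push_neg at hpos
      obtain ⟨m, hm⟩ := hpos
      obtain ⟨n, hn_def⟩ : ∃ y : ℝ, y = -x m := ⟨_, rfl⟩
      have hn : 0 < n := by rw [hn_def]; linarith only [hm]
      have hxm : x m = -n := by rw [hn_def]; ring
      have hγj : ∀ j, j ≠ m → ((k:ℝ) - 1) * n ≤ x j := by
        intro j hj
        have hmj : m ≠ j := fun e => hj e.symm
        have hc := hcon m j hmj
        have ht0' : 0 ≤ tt m j hmj := ht0 m j hmj
        have htu' : tt m j hmj ≤ u := htu m j hmj
        rw [hxm] at hc
        rcases eq_or_lt_of_le ht0' with he | htpos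
        · exfalso
          rw [← he] at hc
          simp at hc
          linarith only [hc, hn]
        · have hku : (k:ℝ)*(tt m j hmj) ≤ 1 - d1 := by
            have h2 := mul_le_mul_of_nonneg_left htu' hkRpos.le
            rw [hd1_def]; linarith only [h2]
          have hc' : (1 - tt m j hmj) * n ≤ tt m j hmj * x j := by nlinarith only [hc]
          have h2 : (k:ℝ)*(tt m j hmj)*n ≤ (1-d1)*n := mul_le_mul_of_nonneg_right hku hn.le
          have key : tt m j hmj * (((k:ℝ)-1)*n) ≤ tt m j hmj * x j := by
            nlinarith only [hc', h2, mul_nonneg hd1.le hn.le]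
          exact le_of_mul_le_mul_left key htpos
      obtain ⟨f, hf⟩ := Finite.exists_max x
      have hγk : (2:ℝ) ≤ (k:ℝ) - 1 := by linarith only [hkR]
      have hj0 : ∃ j0 : Fin k, j0 ≠ m := by
        rcases eq_or_ne m ⟨0, hk0⟩ with h | h
        · exact ⟨⟨1, by omega⟩, by rw [h]; exact Fin.ne_of_val_ne (by norm_num)⟩
        · exact ⟨⟨0, hk0⟩, Ne.symm h⟩
      obtain ⟨j0, hj0⟩ := hj0
      have hfm : f ≠ m := by
        intro e
        have h1 := hγj j0 hj0
        have h2 := hf j0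
        rw [e, hxm] at h2
        nlinarith only [h1, h2, hn, mul_nonneg (sub_nonneg.2 hγk) hn.le]
      obtain ⟨s, hs_def⟩ : ∃ y : ℝ, y = ∑ i, x i := ⟨_, rfl⟩
      rw [← hs_def]
      have hP' : ∑ j ∈ Finset.univ.erase m, x j = s + n := by
        have h1 := Finset.sum_erase_add Finset.univ x (Finset.mem_univ m)
        rw [← hs_def] at h1
        linarith only [h1, hxm]
      have hxm2 : x m^2 = n^2 := by rw [hxm]; ring
      have hsq : ∑ j ∈ Finset.univ.erase m, x j^2 = (∑ i, x i^2) - n^2 := by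
        have h1 := Finset.sum_erase_add Finset.univ (fun i => x i^2) (Finset.mem_univ m)
        linarith only [h1, hxm2]
      have hub : ∑ j ∈ Finset.univ.erase m, x j^2 ≤ x f * (s + n) := by
        have h1 : ∑ j ∈ Finset.univ.erase m, x j^2
            ≤ ∑ j ∈ Finset.univ.erase m, x f * x j := by
          refine Finset.sum_le_sum fun j hj => ?_
          have hjm : j ≠ m := Finset.ne_of_mem_erase hj
          have h2 := hγj j hjm
          have h3 := hf j
          have hxj0 : 0 ≤ x j :=
            le_trans (mul_nonneg (by linarith only [hγk] : (0:ℝ) ≤ (k:ℝ)-1) hn.le) h2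
          nlinarith only [mul_le_mul_of_nonneg_right h3 hxj0]
        rw [← Finset.mul_sum, hP'] at h1
        exact h1
      have hfmem : f ∈ Finset.univ.erase m := Finset.mem_erase.2 ⟨hfm, Finset.mem_univ f⟩
      have htail : ((k:ℝ) - 2) * (((k:ℝ)-1) * n) ≤ (s + n) - x f := by
        have h1 := Finset.sum_erase_add (Finset.univ.erase m) x hfmem
        have h2 : ((Finset.univ.erase m).erase f).card • (((k:ℝ)-1)*n)
            ≤ ∑ j ∈ (Finset.univ.erase m).erase f, x j := by
          refine Finset.card_nsmul_le_sum _ _ _ fun j hj => ?_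
          exact hγj j (Finset.ne_of_mem_erase (Finset.mem_of_mem_erase hj))
        have hcard : ((Finset.univ.erase m).erase f).card = k - 2 := by
          rw [Finset.card_erase_of_mem hfmem, Finset.card_erase_of_mem (Finset.mem_univ m),
            Finset.card_univ, Fintype.card_fin]
          omega
        rw [hcard, nsmul_eq_mul] at h2
        have hcast : ((k-2 : ℕ) : ℝ) = (k:ℝ) - 2 := by
          have h3 : (2:ℕ) ≤ k := by omega
          push_cast [h3]
          ring
        rw [hcast] at h2
        linarith only [h1, hP', h2]
      have hsn : ((k:ℝ)-1)*(((k:ℝ)-1)*n) ≤ s + n := by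
        have h2 : (Finset.univ.erase m).card • (((k:ℝ)-1)*n)
            ≤ ∑ j ∈ Finset.univ.erase m, x j :=
          Finset.card_nsmul_le_sum _ _ _ fun j hj => hγj j (Finset.ne_of_mem_erase hj)
        have hcard : (Finset.univ.erase m).card = k - 1 := by
          rw [Finset.card_erase_of_mem (Finset.mem_univ m), Finset.card_univ, Fintype.card_fin]
        rw [hcard, nsmul_eq_mul] at h2
        have hcast : ((k-1 : ℕ) : ℝ) = (k:ℝ) - 1 := by
          have h3 : (1:ℕ) ≤ k := by omega
          push_cast [h3]
          ring
        rw [hcast, hP'] at h2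
        exact h2
      have hs_pos : 3*n ≤ s := by
        nlinarith only [hsn, mul_nonneg (mul_nonneg (by linarith only [hkR] : (0:ℝ) ≤ (k:ℝ)-3)
          (by linarith only [hkR] : (0:ℝ) ≤ (k:ℝ)+1)) hn.le]
      have hsn0 : (0:ℝ) ≤ s + n := by linarith only [hs_pos, hn]
      have hA := mul_le_mul_of_nonneg_left htail hsn0
      have hB : (2:ℝ) ≤ ((k:ℝ)-2)*((k:ℝ)-1) := by
        nlinarith only [mul_nonneg hkRpos.le (by linarith only [hkR] : (0:ℝ) ≤ (k:ℝ)-3)]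
      have hC2' : 2*(n*(s+n)) ≤ (((k:ℝ)-2)*((k:ℝ)-1))*(n*(s+n)) :=
        mul_le_mul_of_nonneg_right hB (mul_nonneg hn.le hsn0)
      have hfinal : (∑ i, x i^2) ≤ s^2 := by nlinarith only [hub, hsq, hA, hC2']
      exact l2_le_of (by linarith only [hs_pos, hn]) hfinal
  · -- (S3)
    intro x hx
    obtain ⟨hx1, hx2⟩ := hx
    show x ∈ nearAxis k (C * ε)
    obtain ⟨r, hr_def⟩ : ∃ y : ℝ, y = l2 x := ⟨_, rfl⟩
    have hr0 : 0 ≤ r := by rw [hr_def]; exact Real.sqrt_nonneg _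
    have hr2 : ∑ i, x i^2 = r^2 := by rw [hr_def]; exact (l2_sq x).symm
    by_cases hrz : r = 0
    · refine ⟨⟨0, hk0⟩, 0, le_refl 0, ?_⟩
      simp only [zero_smul, sub_zero, mul_zero]
      rw [← hr_def, hrz]
    have hrpos : 0 < r := lt_of_le_of_ne hr0 (Ne.symm hrz)
    obtain ⟨s, hs_def⟩ : ∃ y : ℝ, y = ∑ i, x i := ⟨_, rfl⟩
    obtain ⟨hs1, hs2⟩ : r - ε*r ≤ s ∧ s ≤ r + ε*r := by
      have h : |l2 x - ∑ i, x i| ≤ ε * l2 x := hx2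
      rw [← hr_def, ← hs_def] at h
      have h2 := abs_le.mp h
      constructor <;> linarith only [h2.1, h2.2]
    by_cases hεb : (1:ℝ)/2 ≤ ε
    · -- trivial branch : C ε ≥ 2
      obtain ⟨f⟩ := ‹Nonempty (Fin k)›
      refine ⟨f, r, hr0, ?_⟩
      have hxf2 : x f^2 ≤ r^2 := by
        rw [← hr2]
        exact Finset.single_le_sum (f := fun i => x i^2) (fun i _ => sq_nonneg _)
          (Finset.mem_univ f)
      have hxfr : -r ≤ x f := by nlinarith only [hxf2, hrpos, sq_nonneg (x f + r)]
      have hsum : ∑ i, ((x - r • eVec k f) i)^2 = (∑ i, x i^2) + (r^2 - 2*r*x f) := by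
        have hterm : ∀ i, ((x - r • eVec k f) i)^2
            = x i^2 + (if i = f then r^2 - 2*r*x i else 0) := by
          intro i
          by_cases h : i = f <;>
            simp [eVec, h, Pi.sub_apply, Pi.smul_apply, smul_eq_mul] <;> ring
        rw [Finset.sum_congr rfl fun i _ => hterm i, Finset.sum_add_distrib,
          Finset.sum_ite_eq' Finset.univ f (fun i => r^2 - 2*r*x i)]
        simp
      have h4ε := mul_le_mul_of_nonneg_right hC4 hε.le
      have hCε : 2 ≤ C*ε := by linarith only [h4ε, hεb]
      refine l2_le_of (mul_nonneg (mul_nonneg hCpos.le hε.le) hr0) ?_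
      rw [hsum, hr2]
      have hCε2 : 4 ≤ (C*ε)^2 := by nlinarith only [hCε, sq_nonneg (C*ε - 2)]
      nlinarith only [mul_nonneg hrpos.le (by linarith only [hxfr] : (0:ℝ) ≤ r + x f),
        mul_nonneg (by linarith only [hCε2] : (0:ℝ) ≤ (C*ε)^2 - 4) (sq_nonneg r)]
    · -- main branch : ε < 1/2
      push_neg at hεb
      have hεr : 0 < ε * r := mul_pos hε hrpos
      have hεhalf : ε*r < r/2 := by
        have h1 := mul_lt_mul_of_pos_right hεb hrpos
        linarith only [h1]
      have hshalf : r/2 ≤ s := by linarith only [hs1, hεhalf]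
      have hcon : ∀ (i j : Fin k) (h : i ≠ j),
          -(ε*r) ≤ (1 - tt i j h)*x i + tt i j h * x j := by
        intro i j h
        have h0 := hx1 (col i j h)
        rw [hpair x i j h] at h0
        rwa [← hr_def] at h0
      obtain ⟨f, hf⟩ := Finite.exists_max x
      have hks : s ≤ (k:ℝ) * x f := by
        have h1 : ∑ i, x i ≤ ∑ _i : Fin k, x f := Finset.sum_le_sum fun i _ => hf i
        rw [Finset.sum_const, Finset.card_univ, Fintype.card_fin, nsmul_eq_mul] at h1
        rw [hs_def]
        exact h1
      have hr2k : r ≤ 2*(k:ℝ)*(x f) := by linarith only [hks, hshalf]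
      have hxf0 : 0 < x f := by
        by_contra hle
        push_neg at hle
        have h1 : 2*(k:ℝ)*(x f) ≤ 0 := mul_nonpos_of_nonneg_of_nonpos (by positivity) hle
        linarith only [h1, hr2k, hrpos]
      -- every coordinate is at least -K' ε r
      have lemA : ∀ i, -(K'*(ε*r)) ≤ x i := by
        by_contra hcontra
        push_neg at hcontra
        obtain ⟨m, hm⟩ := hcontra
        obtain ⟨n, hn_def⟩ : ∃ y : ℝ, y = -x m := ⟨_, rfl⟩
        have hn0 : 0 < n := by
          rw [hn_def]
          have h1 : 0 < K'*(ε*r) := mul_pos (by linarith only [hK1]) hεr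
          linarith only [h1, hm]
        have hxm : x m = -n := by rw [hn_def]; ring
        have hnK : K'*(ε*r) < n := by rw [hn_def]; linarith only [hm]
        have h13 : 13*(k:ℝ)*(ε*r) < n*d1 := by
          have h1 : (13*(k:ℝ))*(ε*r) ≤ (K'*d1)*(ε*r) := mul_le_mul_of_nonneg_right hK'd1 hεr.le
          have h2 : (K'*(ε*r))*d1 < n*d1 := mul_lt_mul_of_pos_right hnK hd1
          nlinarith only [h1, h2]
        have hγj : ∀ j, j ≠ m → ((k:ℝ) - 1 + d1/2)*n ≤ x j := by
          intro j hj
          have hmj : m ≠ j := fun e => hj e.symm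
          have hc := hcon m j hmj
          have ht0' : 0 ≤ tt m j hmj := ht0 m j hmj
          have htu' : tt m j hmj ≤ u := htu m j hmj
          rw [hxm] at hc
          rcases eq_or_lt_of_le ht0' with he | htpos
          · exfalso
            rw [← he] at hc
            simp at hc
            nlinarith only [hc, hnK,
              mul_nonneg (by linarith only [hK1] : (0:ℝ) ≤ K'-1) hεr.le]
          · have hku : (k:ℝ)*(tt m j hmj) ≤ 1 - d1 := by
              have h2 := mul_le_mul_of_nonneg_left htu' hkRpos.le
              rw [hd1_def]; linarith only [h2]
            have hεsmall : 4*(k:ℝ)*(ε*r) ≤ n*d1 := by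
              nlinarith only [h13, mul_nonneg (by positivity : (0:ℝ) ≤ 9*(k:ℝ)) hεr.le]
            have hc' : (1 - tt m j hmj)*n - ε*r ≤ tt m j hmj * (x j) := by nlinarith only [hc]
            have hγnn : (0:ℝ) ≤ ((k:ℝ) - 1 + d1/2)*n :=
              mul_nonneg (by linarith only [hkR, hd1] : (0:ℝ) ≤ (k:ℝ) - 1 + d1/2) hn0.le
            have h7 := mul_le_mul_of_nonneg_right hku hn0.le
            -- k*t*n ≤ (1-d1)*n
            have h6 : (1-d1)*(((k:ℝ) - 1 + d1/2)*n) ≤ (k:ℝ)*((1 - tt m j hmj)*n - ε*r) := by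
              nlinarith only [h7, hεsmall, hd1, hd1le, hkR, hn0,
                mul_nonneg (mul_nonneg hd1.le hd1.le) hn0.le,
                mul_nonneg hd1.le hn0.le,
                mul_nonneg (by linarith only [hkR] : (0:ℝ) ≤ (k:ℝ)-3)
                  (mul_nonneg hd1.le hn0.le)]
            have h5 : (k:ℝ)*(tt m j hmj*(((k:ℝ) - 1 + d1/2)*n)) ≤ (1-d1)*(((k:ℝ) - 1 + d1/2)*n) := by
              have h8 := mul_le_mul_of_nonneg_right hku hγnn
              nlinarith only [h8]
            have h9 := mul_le_mul_of_nonneg_left hc' hkRpos.le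
            have h10 : (k:ℝ)*(tt m j hmj*(((k:ℝ) - 1 + d1/2)*n)) ≤ (k:ℝ)*(tt m j hmj*(x j)) := by
              nlinarith only [h5, h6, h9]
            have h11 : tt m j hmj*(((k:ℝ) - 1 + d1/2)*n) ≤ tt m j hmj*(x j) :=
              le_of_mul_le_mul_left h10 hkRpos
            exact le_of_mul_le_mul_left h11 htpos
        have hγ2 : (2:ℝ) ≤ (k:ℝ) - 1 + d1/2 := by linarith only [hkR, hd1]
        have hj0 : ∃ j0 : Fin k, j0 ≠ m := by
          rcases eq_or_ne m ⟨0, hk0⟩ with h | h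
          · exact ⟨⟨1, by omega⟩, by rw [h]; exact Fin.ne_of_val_ne (by norm_num)⟩
          · exact ⟨⟨0, hk0⟩, Ne.symm h⟩
        obtain ⟨j0, hj0⟩ := hj0
        have hfm : f ≠ m := by
          intro e
          have h1 := hγj j0 hj0
          have h2 := hf j0
          rw [e, hxm] at h2
          nlinarith only [h1, h2, hn0, mul_nonneg (sub_nonneg.2 hγ2) hn0.le]
        have hP' : ∑ j ∈ Finset.univ.erase m, x j = s + n := by
          have h1 := Finset.sum_erase_add Finset.univ x (Finset.mem_univ m)
          rw [← hs_def] at h1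
          linarith only [h1, hxm]
        have hxm2 : x m^2 = n^2 := by rw [hxm]; ring
        have hsq : ∑ j ∈ Finset.univ.erase m, x j^2 = r^2 - n^2 := by
          have h1 := Finset.sum_erase_add Finset.univ (fun i => x i^2) (Finset.mem_univ m)
          rw [hr2] at h1
          linarith only [h1, hxm2]
        have hγnn' : (0:ℝ) ≤ ((k:ℝ) - 1 + d1/2)*n :=
          mul_nonneg (by linarith only [hγ2] : (0:ℝ) ≤ (k:ℝ) - 1 + d1/2) hn0.le
        have hub : ∑ j ∈ Finset.univ.erase m, x j^2 ≤ x f * (s + n) := by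
          have h1 : ∑ j ∈ Finset.univ.erase m, x j^2
              ≤ ∑ j ∈ Finset.univ.erase m, x f * x j := by
            refine Finset.sum_le_sum fun j hj => ?_
            have hjm : j ≠ m := Finset.ne_of_mem_erase hj
            have h2 := hγj j hjm
            have h3 := hf j
            have hxj0 : 0 ≤ x j := le_trans hγnn' h2
            nlinarith only [mul_le_mul_of_nonneg_right h3 hxj0]
          rw [← Finset.mul_sum, hP'] at h1
          exact h1
        have hfmem : f ∈ Finset.univ.erase m := Finset.mem_erase.2 ⟨hfm, Finset.mem_univ f⟩
        have htail : ((k:ℝ) - 2) * ((((k:ℝ)-1+d1/2)) * n) ≤ (s + n) - x f := by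
          have h1 := Finset.sum_erase_add (Finset.univ.erase m) x hfmem
          have h2 : ((Finset.univ.erase m).erase f).card • ((((k:ℝ)-1+d1/2))*n)
              ≤ ∑ j ∈ (Finset.univ.erase m).erase f, x j := by
            refine Finset.card_nsmul_le_sum _ _ _ fun j hj => ?_
            exact hγj j (Finset.ne_of_mem_erase (Finset.mem_of_mem_erase hj))
          have hcard : ((Finset.univ.erase m).erase f).card = k - 2 := by
            rw [Finset.card_erase_of_mem hfmem, Finset.card_erase_of_mem (Finset.mem_univ m),
              Finset.card_univ, Fintype.card_fin]
            omega
          rw [hcard, nsmul_eq_mul] at h2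
          have hcast : ((k-2 : ℕ) : ℝ) = (k:ℝ) - 2 := by
            have h3 : (2:ℕ) ≤ k := by omega
            push_cast [h3]
            ring
          rw [hcast] at h2
          linarith only [h1, hP', h2]
        have hsn0 : (0:ℝ) ≤ s + n := by linarith only [hshalf, hn0, hrpos]
        have hA := mul_le_mul_of_nonneg_left htail hsn0
        have hB : (2:ℝ) + d1/2 ≤ ((k:ℝ)-2)*((k:ℝ)-1+d1/2) := by
          nlinarith only [hd1.le,
            mul_nonneg hkRpos.le (by linarith only [hkR] : (0:ℝ) ≤ (k:ℝ)-3),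
            mul_nonneg (by linarith only [hkR] : (0:ℝ) ≤ (k:ℝ)-3) hd1.le]
        have hC2' : ((2:ℝ) + d1/2)*(n*(s+n)) ≤ (((k:ℝ)-2)*((k:ℝ)-1+d1/2))*(n*(s+n)) :=
          mul_le_mul_of_nonneg_right hB (mul_nonneg hn0.le hsn0)
        have hs2low : r^2 + (d1/2)*(n*(s+n)) ≤ s^2 := by
          nlinarith only [hA, hub, hsq, hC2']
        have hs2up : s^2 ≤ r^2 + 3*(ε*r^2) := by
          nlinarith only [mul_le_mul hs2 hs2 (by linarith only [hshalf, hrpos])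
              (by linarith only [hrpos, hεr.le]),
            mul_nonneg (mul_nonneg hε.le (sq_nonneg r))
              (by linarith only [hεb] : (0:ℝ) ≤ 1 - ε)]
        have hns : n*(r/2) ≤ n*(s+n) :=
          mul_le_mul_of_nonneg_left (by linarith only [hshalf, hn0]) hn0.le
        have hfinal2 : (d1/2)*(n*(r/2)) ≤ 3*(ε*r^2) := by
          nlinarith only [hs2low, hs2up,
            mul_le_mul_of_nonneg_left hns (by linarith only [hd1] : (0:ℝ) ≤ d1/2)]
        have hlast := mul_lt_mul_of_pos_right h13 hrpos
        have hkεr : 3*(ε*r*r) ≤ (k:ℝ)*(ε*r*r) :=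
          mul_le_mul_of_nonneg_right hkR (by positivity)
        nlinarith only [hfinal2, hlast, hkεr, mul_pos hεr hrpos]
      -- conclusion from lemA
      have hK'εr : 0 ≤ K'*(ε*r) := mul_nonneg (by linarith only [hK1]) hεr.le
      have habs : ∀ i, |x i| ≤ x i + 2*(K'*(ε*r)) := by
        intro i
        have h1 := lemA i
        rcases abs_cases (x i) with ⟨he, _⟩ | ⟨he, _⟩ <;> rw [he] <;>
          linarith only [h1, hK'εr]
      have hL : ∑ i, |x i| ≤ s + (k:ℝ)*(2*(K'*(ε*r))) := by
        have h1 := Finset.sum_le_sum fun i (_ : i ∈ Finset.univ) => habs i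
        rw [Finset.sum_add_distrib, Finset.sum_const, Finset.card_univ, Fintype.card_fin,
          nsmul_eq_mul, ← hs_def] at h1
        exact h1
      obtain ⟨R, hR_def⟩ : ∃ y : ℝ, y = ∑ i ∈ Finset.univ.erase f, |x i| := ⟨_, rfl⟩
      have hRf : R + x f = ∑ i, |x i| := by
        have h1 := Finset.sum_erase_add Finset.univ (fun i => |x i|) (Finset.mem_univ f)
        simp only [abs_of_pos hxf0] at h1
        rw [← hR_def] at h1
        exact h1
      have hRnn : 0 ≤ R := by
        rw [hR_def]; exact Finset.sum_nonneg fun i _ => abs_nonneg _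
      have hsubsq : ∑ i ∈ Finset.univ.erase f, x i^2 ≤ R^2 := by
        have h1 : ∑ i ∈ Finset.univ.erase f, |x i|^2 ≤ R^2 := by
          rw [hR_def]; exact Finset.sum_sq_le_sq_sum_of_nonneg fun i _ => abs_nonneg _
        simpa [sq_abs] using h1
      have hsplit : x f^2 + ∑ i ∈ Finset.univ.erase f, x i^2 = r^2 := by
        have h1 := Finset.sum_erase_add Finset.univ (fun i => x i^2) (Finset.mem_univ f)
        rw [hr2] at h1
        linarith
      have hDε : ∑ i, |x i| ≤ r + D*(ε*r) := by
        rw [hD_def]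
        nlinarith only [hL, hs2]
      have hLnn : 0 ≤ ∑ i, |x i| := Finset.sum_nonneg fun i _ => abs_nonneg _
      have hL2 : (∑ i, |x i|)^2 ≤ (r + D*(ε*r))^2 := pow_le_pow_left₀ hLnn hDε 2
      have hL2' : (R + x f)^2 ≤ (r + D*(ε*r))^2 := by rw [hRf]; exact hL2
      have hcross : 2*(x f)*R ≤ (r + D*(ε*r))^2 - r^2 := by
        nlinarith only [hL2', hsplit, hsubsq]
      have h1 : 2*(x f)*R ≤ (2*D + D^2)*(ε*r^2) := by
        have hh : 0 ≤ D^2*ε*r^2*(1-ε) := by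
          have : (0:ℝ) ≤ 1 - ε := by linarith
          positivity
        nlinarith only [hcross, hh]
      have hRle : R ≤ E'*(ε*r) := by
        have h2 : r*R ≤ (2*(k:ℝ)*(x f))*R := mul_le_mul_of_nonneg_right hr2k hRnn
        have h3 : r*R ≤ r*(E'*(ε*r)) := by
          rw [hE'_def]
          nlinarith only [h2, mul_le_mul_of_nonneg_left h1 hkRpos.le]
        exact le_of_mul_le_mul_left h3 hrpos
      refine ⟨f, x f, hxf0.le, ?_⟩
      have hsum : ∑ i, ((x - (x f) • eVec k f) i)^2 = ∑ i ∈ Finset.univ.erase f, x i^2 := by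
        have hterm : ∀ i, ((x - (x f) • eVec k f) i)^2 = if i = f then 0 else x i^2 := by
          intro i
          by_cases h : i = f <;> simp [eVec, h, Pi.sub_apply, Pi.smul_apply, smul_eq_mul]
        rw [Finset.sum_congr rfl fun i _ => hterm i]
        rw [← Finset.sum_erase_add Finset.univ _ (Finset.mem_univ f)]
        have h1 : ∑ i ∈ Finset.univ.erase f, (if i = f then (0:ℝ) else x i^2)
            = ∑ i ∈ Finset.univ.erase f, x i^2 :=
          Finset.sum_congr rfl fun i hi => if_neg (Finset.ne_of_mem_erase hi)
        rw [h1]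
        simp
      have hBnn : 0 ≤ C*ε*(x f) := mul_nonneg (mul_nonneg hCpos.le hε.le) hxf0.le
      refine l2_le_of hBnn ?_
      rw [hsum]
      have h4 : R^2 ≤ (E'*(ε*r))^2 := pow_le_pow_left₀ hRnn hRle 2
      have h5 : E'*(ε*r) ≤ C*ε*(x f) := by
        nlinarith only [mul_nonneg (mul_nonneg (sub_nonneg.2 hC2k) hε.le) hxf0.le,
          mul_nonneg (mul_nonneg hE'pos.le hε.le) (sub_nonneg.2 hr2k)]
      have h6 : (E'*(ε*r))^2 ≤ (C*ε*(x f))^2 :=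
        pow_le_pow_left₀ (mul_nonneg hE'pos.le hεr.le) h5 2
      linarith only [hsubsq, h4, h6]
end
end

section
/- There exist constants c₀ > 0 and C > 0, depending only on k, such that the following holds. Let M > 0, 0 ≤ β ≤ 1/2 with Mβ ≤ c₀, and let B ∈ ℝ^{k×k} satisfy: (i) Bᵀ1_k = 1_k (each column of B sums to 1); (ii) ‖B‖₂ ≤ M; (iii) for every row index f ∈ {1,…,k} there exist λ_f ≥ 0 and an index i_f ∈ {1,…,k} such that ‖B(f,:) − λ_f e_{i_f}‖₂ ≤ β λ_f. Then there exists a k×k permutation matrix Π with ‖B − Π‖₂ ≤ C M β. -/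
/-!
Every entry of row `f` away from `i_f` is at most `β λ_f`, and `λ_f ≤ 2 |B(f, i_f)| ≤ 2M` because
`β ≤ 1/2` and entries are bounded by the spectral norm; so all entries off the pattern `f ↦ i_f`
are at most `ε = 2Mβ`. When `kε < 1` a column missed by the pattern cannot sum to `1`, so
`f ↦ i_f` is a permutation, and the column sums then put every pattern entry within `kε` of `1`.
Bounding the spectral norm by the Frobenius norm turns this entrywise bound into `‖B - Π‖₂ ≤ k² ε`.
-/

open scoped BigOperators ENNReal NNReal
open MeasureTheory Matrix

noncomputable section

/-- Permutation matrix of a permutation `σ`. -/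
def permMat {k : ℕ} (σ : Equiv.Perm (Fin k)) : Matrix (Fin k) (Fin k) ℝ :=
  Matrix.of fun i j => if i = σ j then 1 else 0

lemma abs_apply_le_l2 {m : ℕ} (x : Fin m → ℝ) (j : Fin m) : |x j| ≤ l2 x := by
  rw [l2, ← Real.sqrt_sq_eq_abs]
  exact Real.sqrt_le_sqrt (Finset.single_le_sum (fun i _ => sq_nonneg (x i)) (Finset.mem_univ j))

lemma abs_apply_le_of_l2_sub_smul_eVec_le {k : ℕ} {x : Fin k → ℝ} {lam β : ℝ} {i j : Fin k}
    (hlam : 0 ≤ lam) (hβ0 : 0 ≤ β) (hβ : β ≤ 1 / 2) (h : l2 (x - lam • eVec k i) ≤ β * lam)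
    (hji : j ≠ i) : |x j| ≤ 2 * β * |x i| := by
  have hj : |x j| ≤ β * lam := by simpa [eVec, hji] using (abs_apply_le_l2 _ j).trans h
  have hi : |x i - lam| ≤ β * lam := by simpa [eVec] using (abs_apply_le_l2 _ i).trans h
  have hlam_le : lam ≤ 2 * |x i| := by
    have := abs_sub_abs_le_abs_sub lam (x i)
    rw [abs_sub_comm, abs_of_nonneg hlam] at this
    nlinarith
  calc |x j| ≤ β * lam := hj
    _ ≤ β * (2 * |x i|) := mul_le_mul_of_nonneg_left hlam_le hβ0
    _ = 2 * β * |x i| := by ring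

lemma toEuclideanLin_apply_eq_sum {p q : ℕ} (A : Matrix (Fin p) (Fin q) ℝ)
    (x : EuclideanSpace ℝ (Fin q)) (i : Fin p) : toEuclideanLin A x i = ∑ j, A i j * x j :=
  rfl

lemma specNorm_le_sqrt_sum_sq {p q : ℕ} (A : Matrix (Fin p) (Fin q) ℝ) :
    specNorm A ≤ Real.sqrt (∑ i, ∑ j, A i j ^ 2) := by
  refine ContinuousLinearMap.opNorm_le_bound _ (Real.sqrt_nonneg _) fun x => ?_
  rw [LinearMap.coe_toContinuousLinearMap', EuclideanSpace.norm_eq, EuclideanSpace.norm_eq,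
    ← Real.sqrt_mul (by positivity), Finset.sum_mul]
  refine Real.sqrt_le_sqrt (Finset.sum_le_sum fun i _ => ?_)
  simp only [Real.norm_eq_abs, sq_abs, toEuclideanLin_apply_eq_sum]
  exact Finset.sum_mul_sq_le_sq_mul_sq _ _ _

lemma specNorm_le_of_abs_apply_le {p q : ℕ} {A : Matrix (Fin p) (Fin q) ℝ} {δ : ℝ}
    (hδ : 0 ≤ δ) (hA : ∀ i j, |A i j| ≤ δ) : specNorm A ≤ Real.sqrt (p * q) * δ := by
  refine (specNorm_le_sqrt_sum_sq A).trans ?_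
  rw [← Real.sqrt_sq hδ, ← Real.sqrt_mul (by positivity)]
  refine Real.sqrt_le_sqrt ?_
  calc ∑ i, ∑ j, A i j ^ 2 ≤ ∑ _i : Fin p, ∑ _j : Fin q, δ ^ 2 :=
        Finset.sum_le_sum fun i _ => Finset.sum_le_sum fun j _ =>
          sq_le_sq' (abs_le.mp (hA i j)).1 (abs_le.mp (hA i j)).2
    _ = p * q * δ ^ 2 := by
        simp only [Finset.sum_const, Finset.card_univ, Fintype.card_fin, nsmul_eq_mul]
        ring

lemma abs_apply_le_specNorm {p q : ℕ} (A : Matrix (Fin p) (Fin q) ℝ) (i : Fin p) (j : Fin q) :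
    |A i j| ≤ specNorm A := by
  have hAe : toEuclideanLin A (EuclideanSpace.single j 1) i = A i j := by
    simp [toEuclideanLin_apply_eq_sum, PiLp.single_apply]
  calc |A i j| = ‖toEuclideanLin A (EuclideanSpace.single j 1) i‖ := by
        rw [hAe, Real.norm_eq_abs]
    _ ≤ ‖toEuclideanLin A (EuclideanSpace.single j 1)‖ := PiLp.norm_apply_le _ i
    _ ≤ specNorm A * ‖EuclideanSpace.single j (1 : ℝ)‖ :=
        (LinearMap.toContinuousLinearMap (toEuclideanLin A)).le_opNorm _
    _ = specNorm A := by rw [PiLp.norm_single, norm_one, mul_one]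

section NearPermutation

variable {k : ℕ} {B : Matrix (Fin k) (Fin k) ℝ} {idx : Fin k → Fin k} {ε : ℝ}

lemma surjective_of_sum_apply_eq_one (hcol : ∀ j, ∑ i, B i j = 1) (hε : k * ε < 1)
    (hoff : ∀ f j, j ≠ idx f → |B f j| ≤ ε) : Function.Surjective idx := by
  intro j
  by_contra! hj
  have : (1 : ℝ) ≤ k * ε := calc
    1 = ∑ f, B f j := (hcol j).symm
    _ ≤ ∑ _f : Fin k, ε :=
        Finset.sum_le_sum fun f _ => (le_abs_self _).trans (hoff f j (hj f).symm)
    _ = k * ε := by simp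
  linarith

lemma abs_apply_sub_one_le (hcol : ∀ j, ∑ i, B i j = 1) (hinj : Function.Injective idx)
    (hε0 : 0 ≤ ε) (hoff : ∀ f j, j ≠ idx f → |B f j| ≤ ε) (f : Fin k) :
    |B f (idx f) - 1| ≤ k * ε := by
  have hsplit : B f (idx f) - 1 = -∑ g ∈ Finset.univ.erase f, B g (idx f) := by
    rw [← hcol (idx f), ← Finset.add_sum_erase _ _ (Finset.mem_univ f)]
    ring
  rw [hsplit, abs_neg]
  calc |∑ g ∈ Finset.univ.erase f, B g (idx f)|
      ≤ ∑ g ∈ Finset.univ.erase f, |B g (idx f)| := Finset.abs_sum_le_sum_abs _ _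
    _ ≤ ∑ _g ∈ Finset.univ.erase f, ε := Finset.sum_le_sum fun g hg =>
        hoff g (idx f) fun h => Finset.ne_of_mem_erase hg (hinj h).symm
    _ ≤ k * ε := by
        rw [Finset.sum_const, nsmul_eq_mul]
        gcongr
        exact_mod_cast Finset.card_erase_le.trans (Finset.card_fin k).le

theorem exists_perm_abs_sub_permMat_le (hcol : ∀ j, ∑ i, B i j = 1) (hε0 : 0 ≤ ε)
    (hε : k * ε < 1) (hoff : ∀ f j, j ≠ idx f → |B f j| ≤ ε) :
    ∃ σ : Equiv.Perm (Fin k), ∀ f j, |(B - permMat σ) f j| ≤ k * ε := by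
  have hsurj := surjective_of_sum_apply_eq_one hcol hε hoff
  have hinj : Function.Injective idx := Finite.injective_iff_surjective.mpr hsurj
  refine ⟨(Equiv.ofBijective idx ⟨hinj, hsurj⟩).symm, fun f j => ?_⟩
  have hk : (1 : ℝ) ≤ k := by exact_mod_cast Fin.pos f
  simp only [Matrix.sub_apply, permMat, of_apply, Equiv.eq_symm_apply]
  split_ifs with hj
  · subst hj
    exact abs_apply_sub_one_le hcol hinj hε0 hoff f
  · rw [sub_zero]
    exact (hoff f j (Ne.symm hj)).trans (le_mul_of_one_le_left hε0 hk)

end NearPermutation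

/-- A matrix with unit column sums, bounded spectral norm, and rows close to nonnegative
multiples of standard basis vectors, is close to a permutation matrix. -/
theorem stmt12 {k : ℕ} :
    ∃ c₀ C : ℝ, 0 < c₀ ∧ 0 < C ∧
      ∀ (M β : ℝ), 0 < M → 0 ≤ β → β ≤ 1 / 2 → M * β ≤ c₀ →
        ∀ B : Matrix (Fin k) (Fin k) ℝ,
          (∀ j, ∑ i, B i j = 1) →
          specNorm B ≤ M →
          (∀ f : Fin k, ∃ (lam : ℝ) (i : Fin k), 0 ≤ lam ∧
            l2 (B f - lam • eVec k i) ≤ β * lam) →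
          ∃ σ : Equiv.Perm (Fin k), specNorm (B - permMat σ) ≤ C * M * β := by
  refine ⟨1 / (2 * (k + 1)), 2 * (k + 1) ^ 2, by positivity, by positivity, ?_⟩
  intro M β hM hβ0 hβ hMβ B hcol hB hrows
  choose lam idx hlam hrow using hrows
  have hoff : ∀ f j, j ≠ idx f → |B f j| ≤ 2 * M * β := fun f j hj => calc
    |B f j| ≤ 2 * β * |B f (idx f)| :=
        abs_apply_le_of_l2_sub_smul_eVec_le (hlam f) hβ0 hβ (hrow f) hj
    _ ≤ 2 * β * M := by gcongr; exact (abs_apply_le_specNorm B f (idx f)).trans hB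
    _ = 2 * M * β := by ring
  have hsmall : (k : ℝ) * (2 * M * β) < 1 := by
    rw [le_div_iff₀ (by positivity)] at hMβ
    nlinarith
  obtain ⟨σ, hσ⟩ := exists_perm_abs_sub_permMat_le hcol (by positivity) hsmall hoff
  refine ⟨σ, (specNorm_le_of_abs_apply_le (by positivity) hσ).trans ?_⟩
  rw [Real.sqrt_mul_self (Nat.cast_nonneg k)]
  nlinarith [mul_nonneg hM.le hβ0]
end
end

section
/- Let k ≥ 2, x ∈ ℝ^k, and ε ∈ [0, 1/(2k)], and suppose ‖x‖₁ − ‖x‖₂ ≤ ε‖x‖₁. Then there exists an index i ∈ {1,…,k} such that ‖x − x_i e_i‖₂ ≤ 4√(k−1) · ε · |x_i|. -/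
open scoped BigOperators ENNReal NNReal
open MeasureTheory Matrix

noncomputable section

set_option maxHeartbeats 1000000 in
/-- If the ℓ¹ and ℓ² norms of a vector are within a factor `1 - ε` of each other, the
vector is close to a multiple of a standard basis vector. -/
theorem stmt13 {k : ℕ} (hk : 2 ≤ k) (x : Fin k → ℝ) (ε : ℝ)
    (hε0 : 0 ≤ ε) (hε1 : ε ≤ 1 / (2 * k))
    (h : (∑ i, |x i|) - l2 x ≤ ε * ∑ i, |x i|) :
    ∃ i : Fin k, l2 (x - x i • eVec k i) ≤ 4 * Real.sqrt ((k : ℝ) - 1) * ε * |x i| := by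
  have hk0 : (0:ℝ) < k := by
    have : (0:ℕ) < k := by omega
    exact_mod_cast this
  have hεk : ε * k ≤ 1 / 2 := by
    have h2k : (0:ℝ) < 2 * k := by positivity
    have := (le_div_iff₀ h2k).mp hε1
    nlinarith
  have hne : (Finset.univ : Finset (Fin k)).Nonempty := ⟨⟨0, by omega⟩, Finset.mem_univ _⟩
  obtain ⟨i, -, hi⟩ := Finset.exists_max_image Finset.univ (fun j => |x j|) hne
  refine ⟨i, ?_⟩
  set a : ℝ := |x i| with ha
  have ha0 : 0 ≤ a := abs_nonneg _
  set T : ℝ := ∑ j ∈ Finset.univ.erase i, |x j| with hTdef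
  have hT0 : 0 ≤ T := Finset.sum_nonneg fun j _ => abs_nonneg _
  have hS : (∑ j, |x j|) = a + T := (Finset.add_sum_erase _ _ (Finset.mem_univ i)).symm
  -- the vector with coordinate i removed
  have hyi : (x - x i • eVec k i) i = 0 := by simp [eVec]
  have hyj : ∀ j, j ≠ i → (x - x i • eVec k i) j = x j := by
    intro j hj; simp [eVec, hj]
  have hrsq : l2 (x - x i • eVec k i) ^ 2 = ∑ j ∈ Finset.univ.erase i, x j ^ 2 := by
    rw [l2, Real.sq_sqrt (Finset.sum_nonneg fun j _ => sq_nonneg _)]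
    rw [← Finset.add_sum_erase _ _ (Finset.mem_univ i), hyi]
    simp only [ne_eq, zero_pow, OfNat.ofNat_ne_zero, not_false_eq_true, zero_add]
    exact Finset.sum_congr rfl fun j hj => by rw [hyj j (Finset.ne_of_mem_erase hj)]
  set r : ℝ := l2 (x - x i • eVec k i) with hrdef
  have hr0 : 0 ≤ r := Real.sqrt_nonneg _
  -- r² ≤ T²
  have hsum_sq_le : ∑ j ∈ Finset.univ.erase i, x j ^ 2 ≤ T ^ 2 := by
    calc ∑ j ∈ Finset.univ.erase i, x j ^ 2
        ≤ ∑ j ∈ Finset.univ.erase i, |x j| * T := by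
          refine Finset.sum_le_sum fun j hj => ?_
          have h1 : |x j| ≤ T :=
            Finset.single_le_sum (f := fun j => |x j|) (fun j _ => abs_nonneg _) hj
          rw [← sq_abs (x j), sq]
          exact mul_le_mul_of_nonneg_left h1 (abs_nonneg _)
      _ = T * T := by rw [← Finset.sum_mul]
      _ = T ^ 2 := by ring
  have hrT : r ≤ T := by
    nlinarith [hrsq, hsum_sq_le, hr0, hT0]
  -- ℓ² norm squared decomposition
  have hL2 : l2 x ^ 2 = a ^ 2 + ∑ j ∈ Finset.univ.erase i, x j ^ 2 := by
    rw [l2, Real.sq_sqrt (Finset.sum_nonneg fun j _ => sq_nonneg _),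
      ← Finset.add_sum_erase _ _ (Finset.mem_univ i)]
    rw [ha, sq_abs]
  have hL0 : 0 ≤ l2 x := Real.sqrt_nonneg _
  -- from the hypothesis: (1-ε)(a+T) ≤ l2 x
  have hlow : (1 - ε) * (a + T) ≤ l2 x := by rw [hS] at h; linarith
  have hε12 : ε ≤ 1 / 2 := by
    have h1k : (1:ℝ) ≤ k := by
      have : (2:ℝ) ≤ k := by exact_mod_cast hk
      linarith
    nlinarith [mul_le_mul_of_nonneg_left h1k hε0]
  have hlow0 : 0 ≤ (1 - ε) * (a + T) := by nlinarith
  have hlowsq : ((1 - ε) * (a + T)) ^ 2 ≤ a ^ 2 + ∑ j ∈ Finset.univ.erase i, x j ^ 2 := by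
    rw [← hL2]
    nlinarith [hlow, hlow0, hL0]
  -- key: a * T ≤ ε * (a+T)^2
  have hkey : a * T ≤ ε * (a + T) ^ 2 := by
    nlinarith [hlowsq, hsum_sq_le, sq_nonneg (ε * (a + T)), sq_nonneg (a - T)]
  -- S ≤ k * a
  have hSka : a + T ≤ (k : ℝ) * a := by
    have : (∑ j, |x j|) ≤ ∑ _j : Fin k, a :=
      Finset.sum_le_sum fun j _ => hi j (Finset.mem_univ j)
    rw [hS] at this
    simpa using this
  clear_value a T r
  have hT4 : T ≤ 4 * ε * a := by
    rcases eq_or_lt_of_le ha0 with hz | hapos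
    · -- a = 0 forces T = 0
      have h' := hSka
      rw [← hz] at h'
      rw [← hz]
      simp only [zero_add, mul_zero] at h'
      simpa using h' 
    · -- a > 0
      have hεS : 0 ≤ ε * (a + T) := mul_nonneg hε0 (by linarith)
      have h1 : a * T ≤ a * (ε * (k : ℝ) * (a + T)) := by
        have hstep : ε * (a + T) * (a + T) ≤ ε * (a + T) * ((k : ℝ) * a) :=
          mul_le_mul_of_nonneg_left hSka hεS
        calc a * T ≤ ε * (a + T) ^ 2 := hkey
          _ = ε * (a + T) * (a + T) := by ring
          _ ≤ ε * (a + T) * ((k : ℝ) * a) := hstep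
          _ = a * (ε * (k : ℝ) * (a + T)) := by ring
      have h2 : T ≤ ε * (k : ℝ) * (a + T) := le_of_mul_le_mul_left h1 hapos
      have h3 : T ≤ a := by
        have : ε * (k : ℝ) * (a + T) ≤ (1 / 2) * (a + T) :=
          mul_le_mul_of_nonneg_right hεk (by linarith)
        linarith
      have h5 : (a + T) ^ 2 ≤ 4 * a ^ 2 := by nlinarith
      have h4 : a * T ≤ a * (4 * ε * a) := by
        calc a * T ≤ ε * (a + T) ^ 2 := hkey
          _ ≤ ε * (4 * a ^ 2) := mul_le_mul_of_nonneg_left h5 hε0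
          _ = a * (4 * ε * a) := by ring
      exact le_of_mul_le_mul_left h4 hapos
  have hsqrt1 : (1 : ℝ) ≤ Real.sqrt ((k : ℝ) - 1) := by
    have h2 : (2:ℝ) ≤ k := by exact_mod_cast hk
    calc (1:ℝ) = Real.sqrt 1 := Real.sqrt_one.symm
      _ ≤ Real.sqrt ((k : ℝ) - 1) := Real.sqrt_le_sqrt (by linarith)
  calc r ≤ T := hrT
    _ ≤ 4 * ε * a := hT4
    _ ≤ 4 * Real.sqrt ((k : ℝ) - 1) * ε * a := by nlinarith [mul_nonneg hε0 ha0]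
end
end

section
/- Let B ∈ ℝ^{k×k} satisfy Bᵀ1_k = 1_k (each column of B sums to 1) and ‖B(f,:)‖₂ ≤ B(f,:)ᵀ1_k for every row index f ∈ {1,…,k}. Then |det(B)| ≤ 1. Moreover, if |det(B)| = 1, then ‖B(f,:)‖₂ = B(f,:)ᵀ1_k = 1 for every f ∈ {1,…,k}. -/
/-!
Hadamard's inequality bounds `|det B|` by the product of the Euclidean norms of the rows, hence
by the product of the row sums. These row sums are nonnegative and, since every column sums to
one, they add up to `k`; AM-GM therefore bounds their product by `1`. In the equality case AM-GM
forces every row sum to be `1`, so every row norm is at most `1` while their product is at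
least `1`.

Hadamard's inequality itself is reduced to rows of unit norm by scaling; then the Gram matrix
`C Cᵀ` is positive semidefinite with trace `k` and determinant `det C ^ 2`, and AM-GM applied to
its eigenvalues gives `det C ^ 2 ≤ 1`.
-/

open scoped BigOperators ENNReal NNReal
open MeasureTheory Matrix

noncomputable section

section AMGM

variable {ι : Type*} [Fintype ι] {μ : ι → ℝ}

theorem Real.le_exp_sub_one (x : ℝ) : x ≤ Real.exp (x - 1) := by
  linarith [Real.add_one_le_exp (x - 1)]

theorem prod_exp_sub_one_eq_one (hsum : ∑ i, μ i = Fintype.card ι) :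
    ∏ i, Real.exp (μ i - 1) = 1 := by
  simp [← Real.exp_sum, Finset.sum_sub_distrib, hsum]

-- AM-GM in the form `∏ μ ≤ ∏ exp (μ - 1) = exp (∑ μ - card ι) = 1`.
theorem prod_le_one_of_sum_eq_card (h0 : ∀ i, 0 ≤ μ i) (hsum : ∑ i, μ i = Fintype.card ι) :
    ∏ i, μ i ≤ 1 :=
  (Finset.prod_le_prod (fun i _ => h0 i) fun i _ => Real.le_exp_sub_one (μ i)).trans_eq
    (prod_exp_sub_one_eq_one hsum)

theorem eq_one_of_prod_eq_one_of_sum_eq_card (h0 : ∀ i, 0 ≤ μ i)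
    (hsum : ∑ i, μ i = Fintype.card ι) (hprod : ∏ i, μ i = 1) (i : ι) : μ i = 1 := by
  by_contra hne
  have hpos : ∀ j, 0 < μ j := fun j =>
    (h0 j).lt_of_ne' (Finset.prod_ne_zero_iff.1 (hprod ▸ one_ne_zero) j (Finset.mem_univ j))
  have hlt : ∏ j, μ j < ∏ j, Real.exp (μ j - 1) :=
    Finset.prod_lt_prod (fun j _ => hpos j) (fun j _ => Real.le_exp_sub_one (μ j))
      ⟨i, Finset.mem_univ i, by linarith [Real.add_one_lt_exp (sub_ne_zero.2 hne)]⟩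
  rw [hprod, prod_exp_sub_one_eq_one hsum] at hlt
  exact lt_irrefl _ hlt

end AMGM

namespace Matrix

variable {n : Type*} [Fintype n] [DecidableEq n]

theorem abs_det_le_one_of_sum_sq_row_eq_one (C : Matrix n n ℝ)
    (hC : ∀ i, ∑ j, C i j ^ 2 = 1) : |C.det| ≤ 1 := by
  have hG : (C * Cᴴ).PosSemidef := posSemidef_self_mul_conjTranspose C
  have htrace : ∑ i, hG.isHermitian.eigenvalues i = Fintype.card n := by
    have : (C * Cᴴ).trace = Fintype.card n := by
      simp [trace, mul_apply, ← sq, hC]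
    rw [← this]
    simpa using hG.isHermitian.trace_eq_sum_eigenvalues.symm
  have hdet : ∏ i, hG.isHermitian.eigenvalues i = C.det ^ 2 := by
    have := hG.isHermitian.det_eq_prod_eigenvalues
    simp only [det_mul, det_conjTranspose, star_trivial, RCLike.ofReal_real_eq_id, id] at this
    rw [sq, this]
  rw [← sq_le_one_iff_abs_le_one, ← hdet]
  exact prod_le_one_of_sum_eq_card hG.eigenvalues_nonneg htrace

theorem det_eq_zero_of_sum_sq_row_eq_zero {A : Matrix n n ℝ} {i : n} (h : ∑ j, A i j ^ 2 = 0) :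
    A.det = 0 :=
  det_eq_zero_of_row_eq_zero i fun j =>
    pow_eq_zero_iff two_ne_zero |>.1 <|
      (Finset.sum_eq_zero_iff_of_nonneg fun j _ => sq_nonneg (A i j)).1 h j (Finset.mem_univ j)

/-- Hadamard's inequality. -/
theorem abs_det_le_prod_sqrt_sum_sq_row (A : Matrix n n ℝ) :
    |A.det| ≤ ∏ i, √(∑ j, A i j ^ 2) := by
  set r : n → ℝ := fun i => √(∑ j, A i j ^ 2)
  by_cases hzero : ∃ i, r i = 0
  · obtain ⟨i, hi⟩ := hzero
    have hsq : ∑ j, A i j ^ 2 = 0 :=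
      le_antisymm (Real.sqrt_eq_zero'.1 hi) (Finset.sum_nonneg fun j _ => sq_nonneg _)
    rw [det_eq_zero_of_sum_sq_row_eq_zero hsq, abs_zero]
    exact Finset.prod_nonneg fun i _ => Real.sqrt_nonneg _
  push Not at hzero
  have hrpos : ∀ i, 0 < r i := fun i => (Real.sqrt_nonneg _).lt_of_ne' (hzero i)
  have hunit : ∀ i, ∑ j, (diagonal (fun i => (r i)⁻¹) * A) i j ^ 2 = 1 := by
    intro i
    simp only [diagonal_mul, mul_pow, ← Finset.mul_sum, inv_pow]
    rw [← Real.sq_sqrt (Finset.sum_nonneg fun j _ => sq_nonneg (A i j)),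
      inv_mul_cancel₀ (pow_ne_zero 2 (hzero i))]
  have hprod_pos : 0 < ∏ i, r i := Finset.prod_pos fun i _ => hrpos i
  have hscaled := abs_det_le_one_of_sum_sq_row_eq_one _ hunit
  rwa [det_mul, det_diagonal, Finset.prod_inv_distrib, abs_mul, abs_inv, abs_of_pos hprod_pos,
    inv_mul_le_one₀ hprod_pos] at hscaled

end Matrix

/-- Hadamard/AM-GM determinant bound: if the columns of `B` sum to one and each row has
ℓ²-norm at most its row sum, then `|det B| ≤ 1`, with the rows having unit norm and unit
row sums in the equality case. -/
theorem stmt17 {k : ℕ} (B : Matrix (Fin k) (Fin k) ℝ)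
    (hcol : ∀ j, ∑ i, B i j = 1)
    (hrow : ∀ f, l2 (B f) ≤ ∑ j, B f j) :
    |B.det| ≤ 1 ∧
    (|B.det| = 1 → ∀ f, l2 (B f) = 1 ∧ ∑ j, B f j = 1) := by
  have hl2_nonneg : ∀ f, 0 ≤ l2 (B f) := fun f => Real.sqrt_nonneg _
  have hsum_nonneg : ∀ f, 0 ≤ ∑ j, B f j := fun f => (hl2_nonneg f).trans (hrow f)
  have hsum_total : ∑ f, ∑ j, B f j = Fintype.card (Fin k) :=
    Finset.sum_comm.trans (by simp [hcol])
  have hdet : |B.det| ≤ ∏ f, l2 (B f) := B.abs_det_le_prod_sqrt_sum_sq_row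
  have hl2_sum : ∏ f, l2 (B f) ≤ ∏ f, ∑ j, B f j :=
    Finset.prod_le_prod (fun f _ => hl2_nonneg f) fun f _ => hrow f
  have hsum_le := prod_le_one_of_sum_eq_card hsum_nonneg hsum_total
  refine ⟨hdet.trans (hl2_sum.trans hsum_le), fun hdet_one f => ?_⟩
  have hsum_one : ∀ g, ∑ j, B g j = 1 :=
    eq_one_of_prod_eq_one_of_sum_eq_card hsum_nonneg hsum_total
      (le_antisymm hsum_le (hdet_one ▸ hdet.trans hl2_sum))
  have hl2_le : ∀ g, l2 (B g) ≤ 1 := fun g => hsum_one g ▸ hrow g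
  have hprod_le : ∏ g, l2 (B g) ≤ l2 (B f) := by
    simpa using Finset.prod_anti_set_of_le_one hl2_nonneg hl2_le (Finset.subset_univ {f})
  exact ⟨le_antisymm (hl2_le f) (hdet_one ▸ hdet.trans hprod_le), hsum_one f⟩
end
end

section
/- Let C̄ ∈ ℝ^{V×k} have full column rank, let W ∈ ℝ^{k×d} have full row rank with Wᵀ1_k = 1_d (each column of W sums to 1), and let W̄ ∈ ℝ^{k×d} be entrywise nonnegative with W̄ᵀ1_k = 1_d. Let C ∈ ℝ^{V×k} and suppose CW = C̄W̄. Define B = W̄Wᵀ(WWᵀ)^{−1} ∈ ℝ^{k×k}. Then: (a) C = C̄B; (b) Bᵀ1_k = 1_k; (c) BW = W̄; in particular, every row of B lies in the dual cone cone(W)* = {x ∈ ℝ^k : xᵀW ≥ 0 entrywise}. -/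
open scoped BigOperators ENNReal NNReal
open MeasureTheory Matrix

noncomputable section

/-!
With `B = W̄Wᵀ(WWᵀ)⁻¹`, right-multiplying `CW = C̄W̄` by `Wᵀ(WWᵀ)⁻¹` gives `C = C̄B`. Then
`C̄(BW) = CW = C̄W̄`, and `C̄` has trivial kernel, so `BW = W̄`. Since `1ᵀW̄ = 1ᵀ = 1ᵀW`, also
`1ᵀB = 1ᵀWWᵀ(WWᵀ)⁻¹ = 1ᵀ`. Finally `x ∈ cone(W)*` iff `xᵀW ≥ 0`, and the rows of `BW = W̄` are
nonnegative.
-/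

namespace Matrix

variable {m n o K : Type*}

theorem one_vecMul_eq_one_iff [Fintype m] [Semiring K] {A : Matrix m n K} :
    1 ᵥ* A = 1 ↔ ∀ j, ∑ i, A i j = 1 := by
  simp [funext_iff, vecMul, dotProduct]

section Field

variable [Field K]

theorem mulVec_injective_of_rank_eq_card [Fintype n] {A : Matrix m n K}
    (h : A.rank = Fintype.card n) : Function.Injective A.mulVec := by
  rw [mulVec_injective_iff, linearIndependent_iff_card_eq_finrank_span]
  exact h.symm.trans A.rank_eq_finrank_span_cols

theorem eq_of_mul_eq_mul_of_rank_eq_card [Fintype n] [DecidableEq n] {A : Matrix m n K}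
    (h : A.rank = Fintype.card n) {X Y : Matrix n o K} [Fintype o] [DecidableEq o]
    (hAXY : A * X = A * Y) : X = Y :=
  ext_of_mulVec_single fun i =>
    mulVec_injective_of_rank_eq_card h (by rw [mulVec_mulVec, mulVec_mulVec, hAXY])

theorem isUnit_det_mul_transpose_of_rank_eq_card [Fintype m] [Fintype n] [DecidableEq m]
    [LinearOrder K] [IsStrictOrderedRing K] (W : Matrix m n K) (h : W.rank = Fintype.card m) :
    IsUnit (W * Wᵀ).det := by
  rw [← isUnit_iff_isUnit_det, ← mulVec_injective_iff_isUnit]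
  exact mulVec_injective_of_rank_eq_card (by rw [rank_self_mul_transpose, h])

end Field

section GramInverse

variable {l : Type*} [Fintype m] [Fintype n] [DecidableEq m] [CommRing K] {W Wb : Matrix m n K}

theorem eq_mul_mul_transpose_mul_inv (hW : IsUnit (W * Wᵀ).det) {C Cb : Matrix l m K}
    (h : C * W = Cb * Wb) : C = Cb * (Wb * Wᵀ * (W * Wᵀ)⁻¹) :=
  calc C = C * (W * Wᵀ) * (W * Wᵀ)⁻¹ := (mul_nonsing_inv_cancel_right _ _ hW).symm
    _ = Cb * (Wb * Wᵀ * (W * Wᵀ)⁻¹) := by simp only [← Matrix.mul_assoc, h]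

theorem vecMul_mul_transpose_mul_inv (hW : IsUnit (W * Wᵀ).det) {v : m → K}
    (h : v ᵥ* W = v ᵥ* Wb) : v ᵥ* (Wb * Wᵀ * (W * Wᵀ)⁻¹) = v := by
  rw [← vecMul_vecMul, ← vecMul_vecMul, ← h, vecMul_vecMul, vecMul_vecMul,
    ← Matrix.mul_assoc, mul_nonsing_inv _ hW, vecMul_one]

end GramInverse

end Matrix

theorem mem_dualCone_coneOf_iff {p q : ℕ} {A : Matrix (Fin p) (Fin q) ℝ} {x : Fin p → ℝ} :
    x ∈ dualCone (coneOf A) ↔ ∀ j, 0 ≤ (x ᵥ* A) j := by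
  have hdot (lam : Fin q → ℝ) : ∑ i, x i * (A *ᵥ lam) i = (x ᵥ* A) ⬝ᵥ lam :=
    dotProduct_mulVec x A lam
  constructor
  · intro hx j
    have hj := hx (A *ᵥ Pi.single j 1)
      ⟨Pi.single j 1, fun i => by rw [Pi.single_apply]; positivity, rfl⟩
    rwa [hdot, dotProduct_single_one] at hj
  · rintro hx _ ⟨lam, hlam, rfl⟩
    rw [hdot]
    exact Finset.sum_nonneg fun j _ => mul_nonneg (hx j) (hlam j)

/-- Basic properties of `B = W̄Wᵀ(WWᵀ)⁻¹` when `CW = C̄W̄`. -/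
theorem stmt18 {V k d : ℕ} (Cb : Matrix (Fin V) (Fin k) ℝ) (hCb : Cb.rank = k)
    (W : Matrix (Fin k) (Fin d) ℝ) (hWrank : W.rank = k)
    (hW1 : ∀ j, ∑ i, W i j = 1)
    (Wb : Matrix (Fin k) (Fin d) ℝ) (hWb0 : ∀ i j, 0 ≤ Wb i j)
    (hWb1 : ∀ j, ∑ i, Wb i j = 1)
    (C : Matrix (Fin V) (Fin k) ℝ) (hEq : C * W = Cb * Wb) :
    C = Cb * (Wb * Wᵀ * (W * Wᵀ)⁻¹) ∧
    (∀ j, ∑ i, (Wb * Wᵀ * (W * Wᵀ)⁻¹) i j = 1) ∧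
    (Wb * Wᵀ * (W * Wᵀ)⁻¹) * W = Wb ∧
    ∀ f : Fin k, (fun i => (Wb * Wᵀ * (W * Wᵀ)⁻¹) f i) ∈ dualCone (coneOf W) := by
  have hGram : IsUnit (W * Wᵀ).det :=
    W.isUnit_det_mul_transpose_of_rank_eq_card (by simpa using hWrank)
  have hC : C = Cb * (Wb * Wᵀ * (W * Wᵀ)⁻¹) := eq_mul_mul_transpose_mul_inv hGram hEq
  have hBW : Wb * Wᵀ * (W * Wᵀ)⁻¹ * W = Wb :=
    Cb.eq_of_mul_eq_mul_of_rank_eq_card (by simpa using hCb)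
      (by rw [← Matrix.mul_assoc, ← hC, hEq])
  have hcols : 1 ᵥ* (Wb * Wᵀ * (W * Wᵀ)⁻¹) = 1 := vecMul_mul_transpose_mul_inv hGram
    (by rw [one_vecMul_eq_one_iff.2 hW1, one_vecMul_eq_one_iff.2 hWb1])
  refine ⟨hC, one_vecMul_eq_one_iff.1 hcols, hBW, fun f => ?_⟩
  exact mem_dualCone_coneOf_iff.2 fun j =>
    (hWb0 f j).trans_eq (congrFun (congrFun hBW f) j).symm
end
end

section
/- Let W♯, W₁ ∈ ℝ^{k×s} be matrices such that each column of W₁ is within Euclidean distance r ≥ 0 of the corresponding column of W♯, and let α ≥ r. Then [cone(W₁)*]^{α−r} ⊆ [cone(W♯)*]^{α}. Consequently, if W♯ satisfies condition (S3) with parameters (α, β), i.e., [cone(W♯)*]^α ∩ [bdK]^α ⊆ {x ∈ ℝ^k : ‖x − λe_f‖₂ ≤ βλ for some f ∈ {1,…,k} and λ ≥ 0}, then W₁ satisfies condition (S3) with parameters (α − r, β). -/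
open scoped BigOperators ENNReal NNReal
open MeasureTheory Matrix

noncomputable section

/-- Perturbation of the enlarged dual cone: if every column of `W₁` is within distance
`r` of the corresponding column of `W♯`, then `[cone(W₁)*]^(α-r) ⊆ [cone(W♯)*]^α`, and
condition (S3) for `W♯` with parameters `(α, β)` implies (S3) for `W₁` with `(α-r, β)`. -/
theorem stmt19 {k s : ℕ} (Wsharp W1 : Matrix (Fin k) (Fin s) ℝ) (r : ℝ) (hr : 0 ≤ r)
    (hclose : ∀ j, l2 (fun i => W1 i j - Wsharp i j) ≤ r)
    (α : ℝ) (hα : r ≤ α) :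
    dualConeEnl W1 (α - r) ⊆ dualConeEnl Wsharp α ∧
    ∀ β : ℝ,
      dualConeEnl Wsharp α ∩ bdKEnl k α ⊆ nearAxis k β →
      dualConeEnl W1 (α - r) ∩ bdKEnl k (α - r) ⊆ nearAxis k β := by
  have hmain : dualConeEnl W1 (α - r) ⊆ dualConeEnl Wsharp α := by
    intro x hx j
    have hx0 : 0 ≤ l2 x := Real.sqrt_nonneg _
    have hCS : ∑ i, x i * (W1 i j - Wsharp i j) ≤ l2 x * r := by
      have h2 := Finset.sum_mul_sq_le_sq_mul_sq Finset.univ x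
        (fun i => W1 i j - Wsharp i j)
      calc ∑ i, x i * (W1 i j - Wsharp i j)
          ≤ |∑ i, x i * (W1 i j - Wsharp i j)| := le_abs_self _
        _ = Real.sqrt ((∑ i, x i * (W1 i j - Wsharp i j)) ^ 2) :=
            (Real.sqrt_sq_eq_abs _).symm
        _ ≤ Real.sqrt ((∑ i, x i ^ 2) * ∑ i, (W1 i j - Wsharp i j) ^ 2) :=
            Real.sqrt_le_sqrt h2
        _ = Real.sqrt (∑ i, x i ^ 2) *
            Real.sqrt (∑ i, (W1 i j - Wsharp i j) ^ 2) :=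
            Real.sqrt_mul (Finset.sum_nonneg fun i _ => sq_nonneg _) _
        _ ≤ l2 x * r := mul_le_mul_of_nonneg_left (hclose j) hx0
    have h1 := hx j
    have : ∑ i, x i * Wsharp i j
        = (∑ i, x i * W1 i j) - ∑ i, x i * (W1 i j - Wsharp i j) := by
      rw [← Finset.sum_sub_distrib]
      exact Finset.sum_congr rfl fun i _ => by ring
    rw [this]
    have : -(α * l2 x) = -((α - r) * l2 x) - l2 x * r := by ring
    rw [this]
    exact sub_le_sub h1 hCS
  refine ⟨hmain, fun β hβ x hx => ?_⟩
  apply hβ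
  refine ⟨hmain hx.1, ?_⟩
  have hb := hx.2
  have hx0 : 0 ≤ l2 x := Real.sqrt_nonneg _
  exact le_trans hb (mul_le_mul_of_nonneg_right (by linarith) hx0)
end
end
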